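/- arXiv:2304.06443 — 4 statements merged into one kernel-verified Lean document; each statement's English description precedes it below -/
import Mathlib

section
/- Stein integration-by-parts for Gibbs measures: let μ be a probability law on ℝ^d with density e^{−φ} where φ : ℝ^d → ℝ is C¹, and let X be a random vector with law μ. Then, for every differentiable function f : ℝ^d → ℝ^d such that E[‖f(X)‖] + E[|⟨f(X), ∇φ(X)⟩|] + E[|Tr(∇f(X))|] < ∞, one has E[⟨f(X), ∇φ(X)⟩] = E[Tr(∇f(X))], where ∇f(x) denotes the Jacobian matrix of f at x and Tr is the trace. -/
open MeasureTheory Real Filter Topology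
open scoped NNReal ENNReal

lemma pi_div_integral_zero {n : ℕ} (g : (Fin n → ℝ) → (Fin n → ℝ))
    (hg : Differentiable ℝ g) (hgi : Integrable g)
    (hdi : Integrable (fun x => ∑ i, fderiv ℝ g x (Pi.single i 1) i)) :
    ∫ x, ∑ i, fderiv ℝ g x (Pi.single i 1) i = 0 := by
  cases n with
  | zero => simp
  | succ m =>
    set D : (Fin (m+1) → ℝ) → ℝ := fun x => ∑ i, fderiv ℝ g x (Pi.single i 1) i with hD
    have hgc : Continuous g := hg.continuous
    -- the bump function
    let χ : ContDiffBump (0 : Fin (m+1) → ℝ) := ⟨1, 2, one_pos, one_lt_two⟩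
    have hχ : ContDiff ℝ ((1:ℕ∞) : WithTop ℕ∞) (χ : (Fin (m+1) → ℝ) → ℝ) := χ.contDiff
    have hχd : Continuous (fderiv ℝ (χ : (Fin (m+1) → ℝ) → ℝ)) := hχ.continuous_fderiv (by norm_num)
    obtain ⟨C, hC⟩ : ∃ C, ∀ y, ‖fderiv ℝ (χ : (Fin (m+1) → ℝ) → ℝ) y‖ ≤ C :=
      (χ.hasCompactSupport.fderiv (𝕜 := ℝ)).exists_bound_of_continuous hχd
    have hC0 : 0 ≤ C := le_trans (norm_nonneg _) (hC 0)
    -- scaled cutoffs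
    set c : ℕ → ℝ := fun k => ((k : ℝ) + 1)⁻¹ with hc
    have hcpos : ∀ k, 0 < c k := fun k => by positivity
    have hcle : ∀ k, c k ≤ 1 := fun k => by
      rw [hc]
      rw [inv_le_one_iff₀]
      right; linarith [Nat.cast_nonneg (α := ℝ) k]
    set w : ℕ → (Fin (m+1) → ℝ) → ℝ := fun k x => χ (c k • x) with hw
    set L : ℕ → (Fin (m+1) → ℝ) → (Fin (m+1) → ℝ) →L[ℝ] ℝ :=
      fun k x => c k • fderiv ℝ (χ : (Fin (m+1) → ℝ) → ℝ) (c k • x) with hL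
    have hwderiv : ∀ k x, HasFDerivAt (w k) (L k x) x := by
      intro k x
      have h1 : HasFDerivAt (fun y : Fin (m+1) → ℝ => c k • y)
          (c k • ContinuousLinearMap.id ℝ (Fin (m+1) → ℝ)) x :=
        (hasFDerivAt_id x).const_smul (c k)
      have h2 : HasFDerivAt (χ : (Fin (m+1) → ℝ) → ℝ)
          (fderiv ℝ (χ : (Fin (m+1) → ℝ) → ℝ) (c k • x)) (c k • x) :=
        (hχ.differentiable (by norm_num) (c k • x)).hasFDerivAt
      have := h2.comp x h1
      refine this.congr_fderiv ?_
      ext u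
      simp [hL, mul_comm]
    -- norm bound on L
    have hLnorm : ∀ k x, ‖L k x‖ ≤ C := by
      intro k x
      rw [hL]
      calc ‖c k • fderiv ℝ (χ : (Fin (m+1) → ℝ) → ℝ) (c k • x)‖
          = ‖c k‖ * ‖fderiv ℝ (χ : (Fin (m+1) → ℝ) → ℝ) (c k • x)‖ := norm_smul _ _
        _ ≤ 1 * C := by
            apply mul_le_mul _ (hC _) (norm_nonneg _) zero_le_one
            rw [Real.norm_eq_abs, abs_of_pos (hcpos k)]; exact hcle k
        _ = C := one_mul C
    -- derivative of cutoff product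
    set u : ℕ → (Fin (m+1) → ℝ) → (Fin (m+1) → ℝ) := fun k x => w k x • g x with hu
    set u' : ℕ → (Fin (m+1) → ℝ) → (Fin (m+1) → ℝ) →L[ℝ] (Fin (m+1) → ℝ) :=
      fun k x => w k x • fderiv ℝ g x + (L k x).smulRight (g x) with hu'
    have huderiv : ∀ k x, HasFDerivAt (u k) (u' k x) x := by
      intro k x
      exact (hwderiv k x).smul (hg x).hasFDerivAt
    set F : ℕ → (Fin (m+1) → ℝ) → ℝ := fun k x => w k x * D x + L k x (g x) with hF
    have hdivF : ∀ k x, ∑ i, u' k x (Pi.single i 1) i = F k x := by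
      intro k x
      have hexp : g x = ∑ i, g x i • (Pi.single i 1 : Fin (m+1) → ℝ) := by
        conv_lhs => rw [← Finset.univ_sum_single (g x)]
        exact Finset.sum_congr rfl fun i _ => by rw [← Pi.single_smul, smul_eq_mul, mul_one]
      have e1 : ∀ i : Fin (m+1), u' k x (Pi.single i 1) i
          = w k x * fderiv ℝ g x (Pi.single i 1) i + L k x (Pi.single i 1) * g x i := by
        intro i
        simp [hu', mul_comm]
      calc ∑ i, u' k x (Pi.single i 1) i
          = ∑ i, (w k x * fderiv ℝ g x (Pi.single i 1) i + L k x (Pi.single i 1) * g x i) := by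
            exact Finset.sum_congr rfl fun i _ => e1 i
        _ = w k x * D x + ∑ i, L k x (Pi.single i 1) * g x i := by
            rw [Finset.sum_add_distrib, hD, Finset.mul_sum]
        _ = F k x := by
            rw [hF]
            congr 1
            conv_rhs => rw [hexp, map_sum]
            exact Finset.sum_congr rfl fun i _ => by
              rw [_root_.map_smul, smul_eq_mul, mul_comm]
    -- continuity facts
    have hwc : ∀ k, Continuous (w k) := fun k => hχ.continuous.comp (continuous_const_smul _)
    have hLc : ∀ k, Continuous (fun x => L k x (g x)) := by
      intro k
      have h1 : Continuous fun x => fderiv ℝ (χ : (Fin (m+1) → ℝ) → ℝ) (c k • x) :=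
        hχd.comp (continuous_const_smul _)
      have h2 : Continuous fun x => (fderiv ℝ (χ : (Fin (m+1) → ℝ) → ℝ) (c k • x)) (g x) :=
        h1.clm_apply hgc
      have heq : (fun x => L k x (g x))
          = fun x => c k * (fderiv ℝ (χ : (Fin (m+1) → ℝ) → ℝ) (c k • x)) (g x) := by
        funext x; simp [hL]
      rw [heq]; exact continuous_const.mul h2
    have hFmeas : ∀ k, AEStronglyMeasurable (F k) volume := by
      intro k
      exact ((hwc k).aestronglyMeasurable.mul hdi.aestronglyMeasurable).add
        (hLc k).aestronglyMeasurable
    have hwbound : ∀ k x, |w k x| ≤ 1 := by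
      intro k x
      rw [abs_of_nonneg χ.nonneg]; exact χ.le_one
    have hFint : ∀ k, Integrable (F k) := by
      intro k
      apply Integrable.add
      · exact hdi.bdd_mul (hwc k).aestronglyMeasurable
          (c := 1) (Eventually.of_forall fun x => by rw [Real.norm_eq_abs]; exact hwbound k x)
      · apply Integrable.mono (hgi.norm.const_mul C) (hLc k).aestronglyMeasurable
        filter_upwards with x
        calc ‖L k x (g x)‖ ≤ ‖L k x‖ * ‖g x‖ := (L k x).le_opNorm _
          _ ≤ C * ‖g x‖ :=
            mul_le_mul_of_nonneg_right (hLnorm k x) (norm_nonneg _)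
          _ ≤ ‖C * ‖g x‖‖ := le_abs_self _
    -- vanishing for large norm
    have hvanish : ∀ (k : ℕ) (x : Fin (m+1) → ℝ), 2 * ((k:ℝ)+1) < ‖x‖ → w k x = 0 ∧ L k x = 0 := by
      intro k x hx
      have hck1 : c k * ((k:ℝ)+1) = 1 := by
        rw [hc]; field_simp
      have hnorm : 2 < ‖c k • x‖ := by
        rw [norm_smul, Real.norm_eq_abs, abs_of_pos (hcpos k)]
        calc (2:ℝ) = c k * (2 * ((k:ℝ)+1)) := by
              rw [mul_comm (2:ℝ), ← mul_assoc, hck1, one_mul]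
          _ < c k * ‖x‖ := (mul_lt_mul_iff_right₀ (hcpos k)).mpr hx
      have hopen : (χ : (Fin (m+1) → ℝ) → ℝ) =ᶠ[nhds (c k • x)] fun _ => 0 := by
        have hU : IsOpen {y : Fin (m+1) → ℝ | 2 < ‖y‖} :=
          isOpen_lt continuous_const continuous_norm
        filter_upwards [hU.mem_nhds hnorm] with y hy
        have : y ∉ Function.support (χ : (Fin (m+1) → ℝ) → ℝ) := by
          rw [χ.support_eq]
          intro hmem
          rw [Metric.mem_ball, dist_zero_right] at hmem
          exact absurd hmem (not_lt.mpr (le_of_lt hy))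
        exact Function.notMem_support.mp this
      refine ⟨hopen.self_of_nhds, ?_⟩
      have : fderiv ℝ (χ : (Fin (m+1) → ℝ) → ℝ) (c k • x)
          = fderiv ℝ (fun _ : Fin (m+1) → ℝ => (0:ℝ)) (c k • x) := hopen.fderiv_eq
      rw [hL]
      simp only [this, fderiv_const]
      simp
    -- each cutoff integral vanishes (divergence theorem)
    have hFzero : ∀ k, ∫ x, F k x = 0 := by
      intro k
      set R : ℝ := 2 * ((k:ℝ)+1) + 1 with hR
      have hRpos : 2 * ((k:ℝ)+1) < R := by rw [hR]; linarith
      set a : Fin (m+1) → ℝ := fun _ => -R with ha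
      set b : Fin (m+1) → ℝ := fun _ => R with hb
      have hle : a ≤ b := fun i => by
        rw [ha, hb]; simp only; linarith [hRpos, le_of_lt hRpos]
      have hout : ∀ x ∉ Set.Icc a b, 2 * ((k:ℝ)+1) < ‖x‖ := by
        intro x hx
        rw [Set.mem_Icc] at hx
        have hcase : (¬ a ≤ x) ∨ (¬ x ≤ b) := by tauto
        have hbig : ∃ i, R < |x i| := by
          obtain h | h := hcase
          · rw [Pi.le_def] at h
            push_neg at h
            obtain ⟨i, hi⟩ := h
            rw [ha] at hi
            simp only at hi
            exact ⟨i, lt_of_lt_of_le (by linarith) (neg_le_abs _)⟩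
          · rw [Pi.le_def] at h
            push_neg at h
            obtain ⟨i, hi⟩ := h
            rw [hb] at hi
            simp only at hi
            exact ⟨i, lt_of_lt_of_le hi (le_abs_self _)⟩
        obtain ⟨i, hi⟩ := hbig
        calc 2 * ((k:ℝ)+1) < R := hRpos
          _ < |x i| := hi
          _ ≤ ‖x‖ := by rw [← Real.norm_eq_abs]; exact norm_le_pi_norm x i
      have hface : ∀ (i : Fin (m+1)) (r : ℝ), |r| = R → ∀ (y : Fin m → ℝ),
          u k (i.insertNth r y) i = 0 := by
        intro i r hr y
        set p : Fin (m+1) → ℝ := i.insertNth r y with hp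
        have hbig : 2 * ((k:ℝ)+1) < ‖p‖ := by
          calc 2 * ((k:ℝ)+1) < R := hRpos
            _ = |p i| := by rw [hp, Fin.insertNth_apply_same, hr]
            _ ≤ ‖p‖ := by
              rw [← Real.norm_eq_abs]; exact norm_le_pi_norm p i
        rw [hu]
        simp only [(hvanish k _ hbig).1, zero_smul, Pi.zero_apply]
      have hdivthm := MeasureTheory.integral_divergence_of_hasFDerivAt_off_countable
        (a := a) (b := b) hle (u k) (u' k) ∅ Set.countable_empty
        (((hwc k).smul hgc).continuousOn)
        (fun x _ => huderiv k x)
        (by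
          apply Integrable.integrableOn
          have : (fun x => ∑ i, u' k x (Pi.single i 1) i) = F k := funext (hdivF k)
          rw [this]
          exact hFint k)
      have hbox : (∫ x in Set.Icc a b, ∑ i, u' k x (Pi.single i 1) i) = 0 := by
        rw [hdivthm]
        apply Finset.sum_eq_zero
        intro i _
        have h1 : (fun y : Fin m → ℝ => u k (i.insertNth (b i) y) i) = fun _ => (0:ℝ) :=
          funext fun y => hface i (b i) (by rw [hb]; simp only; rw [abs_of_pos]; linarith [hRpos]) y
        have h2 : (fun y : Fin m → ℝ => u k (i.insertNth (a i) y) i) = fun _ => (0:ℝ) :=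
          funext fun y => hface i (a i) (by rw [ha]; simp only [abs_neg]; rw [abs_of_pos]; linarith [hRpos]) y
        rw [show (∫ y in Set.Icc (a ∘ i.succAbove) (b ∘ i.succAbove), u k (i.insertNth (b i) y) i) = 0 by
          rw [show (fun y : Fin m → ℝ => u k (i.insertNth (b i) y) i) = fun _ => (0:ℝ) from h1]; simp,
          show (∫ y in Set.Icc (a ∘ i.succAbove) (b ∘ i.succAbove), u k (i.insertNth (a i) y) i) = 0 by
          rw [show (fun y : Fin m → ℝ => u k (i.insertNth (a i) y) i) = fun _ => (0:ℝ) from h2]; simp]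
        simp
      have hcompl : ∀ x ∉ Set.Icc a b, F k x = 0 := by
        intro x hx
        obtain ⟨hw0, hL0⟩ := hvanish k x (hout x hx)
        rw [hF]
        simp only [hw0, hL0, zero_mul, ContinuousLinearMap.zero_apply, add_zero]
      calc ∫ x, F k x = ∫ x in Set.Icc a b, F k x :=
            (setIntegral_eq_integral_of_forall_compl_eq_zero hcompl).symm
        _ = ∫ x in Set.Icc a b, ∑ i, u' k x (Pi.single i 1) i := by
            apply setIntegral_congr_fun measurableSet_Icc
            intro x _
            exact (hdivF k x).symm
        _ = 0 := hbox
    -- limit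
    have hlim : Tendsto (fun k => ∫ x, F k x) atTop (𝓝 (∫ x, D x)) := by
      apply tendsto_integral_of_dominated_convergence (fun x => |D x| + C * ‖g x‖) hFmeas
        (hdi.abs.add (hgi.norm.const_mul C))
      · intro k
        filter_upwards with x
        calc ‖F k x‖ ≤ ‖w k x * D x‖ + ‖L k x (g x)‖ := norm_add_le _ _
          _ ≤ |D x| + C * ‖g x‖ := by
            apply add_le_add
            · rw [Real.norm_eq_abs, abs_mul]
              calc |w k x| * |D x| ≤ 1 * |D x| :=
                  mul_le_mul_of_nonneg_right (hwbound k x) (abs_nonneg _)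
                _ = |D x| := one_mul _
            · calc ‖L k x (g x)‖ ≤ ‖L k x‖ * ‖g x‖ := (L k x).le_opNorm _
                _ ≤ C * ‖g x‖ := mul_le_mul_of_nonneg_right (hLnorm k x) (norm_nonneg _)
      · filter_upwards with x
        have hev : ∀ᶠ k in atTop, F k x = D x := by
          rw [eventually_atTop]
          refine ⟨⌈‖x‖⌉₊, fun k hk => ?_⟩
          have hxk : ‖x‖ < (k:ℝ) + 1 := by
            calc ‖x‖ ≤ (⌈‖x‖⌉₊ : ℝ) := Nat.le_ceil _
              _ ≤ (k:ℝ) := by exact_mod_cast hk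
              _ < (k:ℝ) + 1 := by linarith
          have hball : c k • x ∈ Metric.ball (0 : Fin (m+1) → ℝ) 1 := by
            rw [Metric.mem_ball, dist_zero_right, norm_smul, Real.norm_eq_abs,
              abs_of_pos (hcpos k)]
            have hck1 : c k * ((k:ℝ)+1) = 1 := by rw [hc]; field_simp
            calc c k * ‖x‖ < c k * ((k:ℝ)+1) := (mul_lt_mul_iff_right₀ (hcpos k)).mpr hxk
              _ = 1 := hck1
          have hw1 : w k x = 1 := by
            rw [hw]
            exact χ.one_of_mem_closedBall (Metric.ball_subset_closedBall hball)
          have hL0 : L k x = 0 := by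
            have hev1 : (χ : (Fin (m+1) → ℝ) → ℝ) =ᶠ[nhds (c k • x)] fun _ => (1:ℝ) :=
              χ.eventuallyEq_one_of_mem_ball hball
            have : fderiv ℝ (χ : (Fin (m+1) → ℝ) → ℝ) (c k • x)
                = fderiv ℝ (fun _ : Fin (m+1) → ℝ => (1:ℝ)) (c k • x) := hev1.fderiv_eq
            rw [hL]
            simp only [this, fderiv_const]
            simp
          rw [hF]
          simp only [hw1, hL0, one_mul, ContinuousLinearMap.zero_apply, add_zero]
        exact Tendsto.congr' (hev.mono fun k h => h.symm) tendsto_const_nhds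
    have h0 : Tendsto (fun _ : ℕ => (0:ℝ)) atTop (𝓝 (∫ x, D x)) := by
      rw [show (fun _ : ℕ => (0:ℝ)) = fun k => ∫ x, F k x from funext fun k => (hFzero k).symm]
      exact hlim
    exact tendsto_nhds_unique h0 tendsto_const_nhds

open scoped RealInnerProductSpace

lemma euclid_trace_eq_sum {d : ℕ} (A : EuclideanSpace ℝ (Fin d) →L[ℝ] EuclideanSpace ℝ (Fin d)) :
    LinearMap.trace ℝ (EuclideanSpace ℝ (Fin d))
      (A : EuclideanSpace ℝ (Fin d) →ₗ[ℝ] EuclideanSpace ℝ (Fin d))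
      = ∑ i, A (EuclideanSpace.single i 1) i := by
  classical
  rw [LinearMap.trace_eq_matrix_trace ℝ ((EuclideanSpace.basisFun (Fin d) ℝ).toBasis)]
  rw [Matrix.trace]
  apply Finset.sum_congr rfl
  intro i _
  rw [Matrix.diag_apply, LinearMap.toMatrix_apply, OrthonormalBasis.coe_toBasis_repr_apply,
    EuclideanSpace.basisFun_repr, OrthonormalBasis.coe_toBasis, EuclideanSpace.basisFun_apply]
  rfl

lemma euclid_sum_single_smul {d : ℕ} (v : EuclideanSpace ℝ (Fin d)) :
    ∑ i, v i • EuclideanSpace.single i (1:ℝ) = v := by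
  classical
  conv_rhs => rw [← ((EuclideanSpace.basisFun (Fin d) ℝ).toBasis).sum_repr v]
  apply Finset.sum_congr rfl
  intro i _
  rw [OrthonormalBasis.coe_toBasis_repr_apply, EuclideanSpace.basisFun_repr,
    OrthonormalBasis.coe_toBasis, EuclideanSpace.basisFun_apply]

theorem stein_ibp_gibbs (d : ℕ)
    (φ : EuclideanSpace ℝ (Fin d) → ℝ) (hφ : ContDiff ℝ 1 φ)
    (hdensity : ∫ x : EuclideanSpace ℝ (Fin d), Real.exp (-φ x) = 1)
    (Ω : Type*) [MeasurableSpace Ω] (P : Measure Ω) [IsProbabilityMeasure P]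
    (X : Ω → EuclideanSpace ℝ (Fin d)) (hX : Measurable X)
    (hlaw : Measure.map X P =
      volume.withDensity (fun x => ENNReal.ofReal (Real.exp (-φ x))))
    (f : EuclideanSpace ℝ (Fin d) → EuclideanSpace ℝ (Fin d))
    (hf : Differentiable ℝ f)
    (hint1 : Integrable (fun ω => ‖f (X ω)‖) P)
    (hint2 : Integrable (fun ω => |⟪f (X ω), gradient φ (X ω)⟫|) P)
    (hint3 : Integrable (fun ω =>
      |LinearMap.trace ℝ (EuclideanSpace ℝ (Fin d))
        ((fderiv ℝ f (X ω)) : EuclideanSpace ℝ (Fin d) →ₗ[ℝ] EuclideanSpace ℝ (Fin d))|) P) :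
    ∫ ω, ⟪f (X ω), gradient φ (X ω)⟫ ∂P =
      ∫ ω, LinearMap.trace ℝ (EuclideanSpace ℝ (Fin d))
        ((fderiv ℝ f (X ω)) : EuclideanSpace ℝ (Fin d) →ₗ[ℝ] EuclideanSpace ℝ (Fin d)) ∂P := by
  classical
  set ψ : (EuclideanSpace ℝ (Fin d)) → ℝ := fun x => Real.exp (-φ x) with hψ
  have hψc : Continuous ψ := Real.continuous_exp.comp hφ.continuous.neg
  have hψnn : ∀ x, 0 ≤ ψ x := fun x => (Real.exp_pos _).le
  set S : (EuclideanSpace ℝ (Fin d)) → ℝ := fun x => ⟪f x, gradient φ x⟫ with hS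
  set T : (EuclideanSpace ℝ (Fin d)) → ℝ := fun x => LinearMap.trace ℝ (EuclideanSpace ℝ (Fin d)) ((fderiv ℝ f x : (EuclideanSpace ℝ (Fin d)) →ₗ[ℝ] (EuclideanSpace ℝ (Fin d)))) with hT
  -- continuity/measurability of S and T
  have hφd : Differentiable ℝ φ := hφ.differentiable one_ne_zero
  have hgradc : Continuous (gradient φ) := by
    have h1 : Continuous (fderiv ℝ φ) := hφ.continuous_fderiv one_ne_zero
    exact ((InnerProductSpace.toDual ℝ (EuclideanSpace ℝ (Fin d))).symm.continuous).comp h1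
  have hSc : Continuous S := (hf.continuous.inner hgradc)
  have hTm : Measurable T := by
    have h1 : Measurable (fderiv ℝ f) := measurable_fderiv ℝ f
    set TrL : ((EuclideanSpace ℝ (Fin d)) →L[ℝ] (EuclideanSpace ℝ (Fin d))) →ₗ[ℝ] ℝ := (LinearMap.trace ℝ (EuclideanSpace ℝ (Fin d))).comp (ContinuousLinearMap.coeLM ℝ)
      with hTrL
    have h2 : Continuous TrL := TrL.continuous_of_finiteDimensional
    exact h2.measurable.comp h1
  -- the density as NNReal
  set ρ : (EuclideanSpace ℝ (Fin d)) → ℝ≥0 := fun x => (ψ x).toNNReal with hρ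
  have hρm : Measurable ρ := hψc.measurable.real_toNNReal
  have hlaw' : Measure.map X P = volume.withDensity (fun x => ((ρ x : ℝ≥0) : ℝ≥0∞)) := hlaw
  -- transfer of integrals
  have keyI : ∀ (h : (EuclideanSpace ℝ (Fin d)) → ℝ), Measurable h →
      (∫ ω, h (X ω) ∂P = ∫ x, ψ x * h x) := by
    intro h hm
    have e1 : ∫ y, h y ∂(Measure.map X P) = ∫ ω, h (X ω) ∂P :=
      integral_map hX.aemeasurable hm.aestronglyMeasurable
    rw [← e1, hlaw', integral_withDensity_eq_integral_smul hρm]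
    apply integral_congr_ae
    filter_upwards with x
    rw [hρ, NNReal.smul_def, Real.coe_toNNReal _ (hψnn x), smul_eq_mul]
  have keyInt : ∀ (h : (EuclideanSpace ℝ (Fin d)) → ℝ), Measurable h → Integrable (h ∘ X) P →
      Integrable (fun x => ψ x * h x) := by
    intro h hm hi
    have h1 : Integrable h (Measure.map X P) :=
      (integrable_map_measure hm.aestronglyMeasurable hX.aemeasurable).mpr hi
    rw [hlaw'] at h1
    have h2 := (integrable_withDensity_iff_integrable_smul hρm).mp h1
    apply h2.congr
    filter_upwards with x
    rw [hρ, NNReal.smul_def, Real.coe_toNNReal _ (hψnn x), smul_eq_mul]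
  -- integrability of pieces
  have hSX : Integrable (S ∘ X) P := by
    have : AEStronglyMeasurable (S ∘ X) P :=
      (hSc.stronglyMeasurable.comp_measurable hX).aestronglyMeasurable
    have h2 : (fun ω => |S (X ω)|) = fun ω => ‖(S ∘ X) ω‖ :=
      funext fun ω => (Real.norm_eq_abs _).symm
    rw [h2] at hint2
    exact (integrable_norm_iff this).mp hint2
  have hTX : Integrable (T ∘ X) P := by
    have : AEStronglyMeasurable (T ∘ X) P :=
      ((hTm.comp hX).stronglyMeasurable).aestronglyMeasurable
    have h2 : (fun ω => |LinearMap.trace ℝ (EuclideanSpace ℝ (Fin d))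
        ((fderiv ℝ f (X ω)) : EuclideanSpace ℝ (Fin d) →ₗ[ℝ] EuclideanSpace ℝ (Fin d))|)
        = fun ω => ‖(T ∘ X) ω‖ :=
      funext fun ω => (Real.norm_eq_abs _).symm
    rw [h2] at hint3
    exact (integrable_norm_iff this).mp hint3
  have hψS : Integrable (fun x => ψ x * S x) := keyInt S hSc.measurable hSX
  have hψT : Integrable (fun x => ψ x * T x) := keyInt T hTm hTX
  -- integrability of G = ψ • f
  set G : (EuclideanSpace ℝ (Fin d)) → (EuclideanSpace ℝ (Fin d)) := fun x => ψ x • f x with hG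
  have hGint : Integrable G := by
    have hfX : Integrable (f ∘ X) P := by
      have : AEStronglyMeasurable (f ∘ X) P :=
        (hf.continuous.stronglyMeasurable.comp_measurable hX).aestronglyMeasurable
      exact (integrable_norm_iff this).mp hint1
    have h1 : Integrable f (Measure.map X P) :=
      (integrable_map_measure hf.continuous.aestronglyMeasurable hX.aemeasurable).mpr hfX
    rw [hlaw'] at h1
    have h2 := (integrable_withDensity_iff_integrable_smul hρm).mp h1
    apply h2.congr
    filter_upwards with x
    rw [hρ, NNReal.smul_def, Real.coe_toNNReal _ (hψnn x), hG]
  -- derivative of G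
  have hψd : ∀ x, HasFDerivAt ψ ((-ψ x) • fderiv ℝ φ x) x := by
    intro x
    have h1 : HasFDerivAt (fun y => -φ y) (-fderiv ℝ φ x) x := (hφd x).hasFDerivAt.neg
    have h2 := h1.exp
    simp only [neg_smul, smul_neg] at h2 ⊢
    exact h2
  have hGd : ∀ x, HasFDerivAt G
      (ψ x • fderiv ℝ f x + ((-ψ x) • fderiv ℝ φ x).smulRight (f x)) x :=
    fun x => (hψd x).smul (hf x).hasFDerivAt
  have hGdiff : Differentiable ℝ G := fun x => (hGd x).differentiableAt
  -- divergence of G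
  have hgrad_apply : ∀ x v, fderiv ℝ φ x v = ⟪gradient φ x, v⟫ := by
    intro x v
    rw [show gradient φ x
        = (InnerProductSpace.toDual ℝ (EuclideanSpace ℝ (Fin d))).symm (fderiv ℝ φ x) from rfl,
      InnerProductSpace.toDual_symm_apply]
  have hdivG : ∀ x, ∑ i, fderiv ℝ G x (EuclideanSpace.single i 1) i
      = ψ x * T x - ψ x * S x := by
    intro x
    rw [(hGd x).fderiv]
    have e1 : ∀ i : Fin d,
        (ψ x • fderiv ℝ f x + ((-ψ x) • fderiv ℝ φ x).smulRight (f x))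
          (EuclideanSpace.single i 1) i
        = ψ x * fderiv ℝ f x (EuclideanSpace.single i 1) i
          + ((-ψ x) • fderiv ℝ φ x) (EuclideanSpace.single i 1) * f x i := by
      intro i
      simp only [ContinuousLinearMap.add_apply, ContinuousLinearMap.coe_smul',
        Pi.smul_apply, ContinuousLinearMap.smulRight_apply]
      rfl
    calc ∑ i, (ψ x • fderiv ℝ f x + ((-ψ x) • fderiv ℝ φ x).smulRight (f x))
          (EuclideanSpace.single i 1) i
        = ∑ i, (ψ x * fderiv ℝ f x (EuclideanSpace.single i 1) i
            + ((-ψ x) • fderiv ℝ φ x) (EuclideanSpace.single i 1) * f x i) :=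
          Finset.sum_congr rfl fun i _ => e1 i
      _ = ψ x * (∑ i, fderiv ℝ f x (EuclideanSpace.single i 1) i)
            + ((-ψ x) • fderiv ℝ φ x) (f x) := by
          rw [Finset.sum_add_distrib, Finset.mul_sum]
          congr 1
          conv_rhs => rw [show f x = ∑ i, f x i • EuclideanSpace.single i (1:ℝ) from
            (euclid_sum_single_smul (f x)).symm, map_sum]
          exact Finset.sum_congr rfl fun i _ => by
            rw [_root_.map_smul, smul_eq_mul, mul_comm]
      _ = ψ x * T x - ψ x * S x := by
          have hl : ((-ψ x) • fderiv ℝ φ x) (f x) = -(ψ x * S x) := by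
            rw [ContinuousLinearMap.smul_apply, hgrad_apply, smul_eq_mul]
            simp only [hS]
            rw [real_inner_comm]
            ring
          have hTx : T x = ∑ i, fderiv ℝ f x (EuclideanSpace.single i 1) i := by
            simp only [hT]
            exact euclid_trace_eq_sum (fderiv ℝ f x)
          rw [hl, hTx]
          ring
  -- transport to the pi space
  set ι : (EuclideanSpace ℝ (Fin d)) ≃L[ℝ] (Fin d → ℝ) := (EuclideanSpace.equiv (Fin d) ℝ) with hι
  set eμ := (MeasurableEquiv.toLp 2 (Fin d → ℝ)).symm with heμ
  have hcoe : ∀ y : Fin d → ℝ, eμ.symm y = ι.symm y := fun _ => rfl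
  have hcoe2 : ∀ x : (EuclideanSpace ℝ (Fin d)), eμ x = ι x := fun _ => rfl
  have hmp : MeasurePreserving (⇑eμ.symm) volume volume :=
    (EuclideanSpace.volume_preserving_symm_measurableEquiv_toLp (Fin d)).symm
  set g0 : (Fin d → ℝ) → (Fin d → ℝ) := fun y => ι (G (ι.symm y)) with hg0
  have hg0diff : Differentiable ℝ g0 :=
    (ι.differentiable).comp (hGdiff.comp ι.symm.differentiable)
  have hg0deriv : ∀ y : Fin d → ℝ, HasFDerivAt g0
      ((ι.toContinuousLinearMap.comp (fderiv ℝ G (ι.symm y))).comp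
        ι.symm.toContinuousLinearMap) y := by
    intro y
    have h1 : HasFDerivAt (⇑ι.symm) ι.symm.toContinuousLinearMap y :=
      ι.symm.toContinuousLinearMap.hasFDerivAt
    have h2 : HasFDerivAt G (fderiv ℝ G (ι.symm y)) (ι.symm y) :=
      (hGdiff (ι.symm y)).hasFDerivAt
    have h3 : HasFDerivAt (⇑ι) ι.toContinuousLinearMap (G (ι.symm y)) :=
      ι.toContinuousLinearMap.hasFDerivAt
    exact (h3.comp (ι.symm y) h2 |>.comp y h1)
  set Φ : (EuclideanSpace ℝ (Fin d)) → ℝ := fun x => ψ x * T x - ψ x * S x with hΦ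
  have hg0div : ∀ y, ∑ i, fderiv ℝ g0 y (Pi.single i 1) i = Φ (ι.symm y) := by
    intro y
    rw [(hg0deriv y).fderiv]
    have : ∀ i : Fin d,
        ((ι.toContinuousLinearMap.comp (fderiv ℝ G (ι.symm y))).comp
          ι.symm.toContinuousLinearMap) (Pi.single i 1) i
        = fderiv ℝ G (ι.symm y) (EuclideanSpace.single i 1) i := by
      intro i
      rfl
    rw [Finset.sum_congr rfl fun i _ => this i]
    rw [hdivG (ι.symm y)]
  have hg0int : Integrable g0 := by
    have h1 : Integrable (fun x : (EuclideanSpace ℝ (Fin d)) => ι (G x)) := ι.toContinuousLinearMap.integrable_comp hGint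
    have h2 : g0 = (fun x : (EuclideanSpace ℝ (Fin d)) => ι (G x)) ∘ ⇑eμ.symm := rfl
    rw [h2]
    exact (hmp.integrable_comp_emb eμ.symm.measurableEmbedding).mpr h1
  have hΦint : Integrable Φ := hψT.sub hψS
  have hg0divint : Integrable (fun y => ∑ i, fderiv ℝ g0 y (Pi.single i 1) i) := by
    have h2 : (fun y => ∑ i, fderiv ℝ g0 y (Pi.single i 1) i) = Φ ∘ ⇑eμ.symm :=
      funext fun y => hg0div y
    rw [h2]
    exact (hmp.integrable_comp_emb eμ.symm.measurableEmbedding).mpr hΦint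
  have hzero : ∫ x, Φ x = 0 := by
    have h1 := pi_div_integral_zero g0 hg0diff hg0int hg0divint
    have h2 : (fun y => ∑ i, fderiv ℝ g0 y (Pi.single i 1) i) = fun y => Φ (eμ.symm y) :=
      funext fun y => hg0div y
    rw [h2] at h1
    rwa [hmp.integral_comp eμ.symm.measurableEmbedding Φ] at h1
  -- conclude
  have hL : ∫ ω, ⟪f (X ω), gradient φ (X ω)⟫ ∂P = ∫ x, ψ x * S x := keyI S hSc.measurable
  have hR : ∫ ω, LinearMap.trace ℝ (EuclideanSpace ℝ (Fin d)) ((fderiv ℝ f (X ω) : (EuclideanSpace ℝ (Fin d)) →ₗ[ℝ] (EuclideanSpace ℝ (Fin d)))) ∂P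
      = ∫ x, ψ x * T x := keyI T hTm
  rw [hL, hR]
  have : ∫ x, Φ x = (∫ x, ψ x * T x) - ∫ x, ψ x * S x := integral_sub hψT hψS
  rw [this] at hzero
  linarith
end

section
/- Stein total-variation bound: let F be an integrable real-valued random variable and let N be a standard Gaussian random variable. Then d_TV(F,N) ≤ sup_g |E[g'(F) − F·g(F)]|, where the supremum runs over all continuously differentiable functions g : ℝ → ℝ such that |g(x)| ≤ √π/2 and |g'(x)| ≤ 2 for all x ∈ ℝ. -/
open MeasureTheory ProbabilityTheory Real

open Set Filter Topology
open scoped NNReal ENNReal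

namespace SteinAux

noncomputable def phi (y : ℝ) : ℝ := Real.exp (-(y^2)/2)

lemma phi_pos (y : ℝ) : 0 < phi y := Real.exp_pos _

lemma phi_nonneg (y : ℝ) : 0 ≤ phi y := (phi_pos y).le

lemma phi_le_one (y : ℝ) : phi y ≤ 1 := by
  rw [phi, Real.exp_le_one_iff]
  nlinarith [sq_nonneg y]

lemma continuous_phi : Continuous phi := by
  unfold phi; fun_prop

lemma phi_eq (y : ℝ) : phi y = Real.exp (-(1/2) * y^2) := by
  unfold phi; ring_nf

lemma integrable_phi : Integrable phi := by
  have h := integrable_exp_neg_mul_sq (b := (1:ℝ)/2) (by norm_num)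
  refine h.congr ?_
  filter_upwards with y
  rw [phi_eq]

lemma integral_phi : ∫ y, phi y = Real.sqrt (2*π) := by
  have h := integral_gaussian (1/2 : ℝ)
  simp only [← phi_eq] at h
  rw [h]
  rw [div_div_eq_mul_div, div_one, mul_comm]

lemma phi_even (y : ℝ) : phi (-y) = phi y := by simp [phi]

noncomputable def J (w : ℝ) : ℝ := ∫ y in Iic w, phi y
noncomputable def I (w : ℝ) : ℝ := ∫ y in Ioi w, phi y

lemma J_add_I (w : ℝ) : J w + I w = Real.sqrt (2*π) := by
  rw [J, I, ← integral_phi]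
  exact intervalIntegral.integral_Iic_add_Ioi integrable_phi.integrableOn integrable_phi.integrableOn

lemma I_nonneg (w : ℝ) : 0 ≤ I w := setIntegral_nonneg measurableSet_Ioi fun y _ => phi_nonneg y
lemma J_nonneg (w : ℝ) : 0 ≤ J w := setIntegral_nonneg measurableSet_Iic fun y _ => phi_nonneg y

lemma I_neg (w : ℝ) : I (-w) = J w := by
  rw [I, J, ← integral_comp_neg_Iic]
  simp [phi_even]

lemma J_neg (w : ℝ) : J (-w) = I w := by
  rw [← I_neg, neg_neg]


lemma hasDerivAt_phi (w : ℝ) : HasDerivAt phi (-w * phi w) w := by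
  have h : HasDerivAt (fun y : ℝ => -(y^2)/2) (-w) w := by
    have := ((hasDerivAt_pow 2 w).neg).div_const 2
    simpa using this.congr_deriv (by ring)
  have h2 := h.exp
  unfold phi
  convert h2 using 1
  ring

lemma integrable_id_phi : Integrable (fun y => y * phi y) := by
  have h := integrable_rpow_mul_exp_neg_mul_sq (b := (1:ℝ)/2) (by norm_num) (s := 1) (by norm_num)
  simp only [Real.rpow_one] at h
  refine h.congr ?_
  filter_upwards with y
  rw [phi]; ring_nf

lemma phi_tendsto : Tendsto phi atTop (𝓝 0) := by
  have h1 : Tendsto (fun y : ℝ => -(y^2)/2) atTop atBot := by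
    apply Tendsto.atBot_div_const (by norm_num : (0:ℝ) < 2)
    exact tendsto_neg_atBot_iff.mpr (tendsto_pow_atTop (by norm_num))
  exact Real.tendsto_exp_atBot.comp h1

lemma integral_id_phi_Ioi (w : ℝ) : ∫ y in Ioi w, y * phi y = phi w := by
  have h := integral_Ioi_of_hasDerivAt_of_tendsto' (a := w) (f := fun y => -phi y)
    (f' := fun y => y * phi y) (m := 0)
    (fun x _ => by exact (hasDerivAt_phi x).neg.congr_deriv (by ring))
    integrable_id_phi.integrableOn (by simpa using phi_tendsto.neg)
  simpa using h

lemma tail (w : ℝ) (hw : 0 < w) : w * I w ≤ phi w := by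
  rw [← integral_id_phi_Ioi w, I, ← MeasureTheory.integral_const_mul]
  apply setIntegral_mono_on (integrable_phi.integrableOn.const_mul w)
    integrable_id_phi.integrableOn measurableSet_Ioi
  intro y hy
  have := phi_nonneg y
  nlinarith [le_of_lt (mem_Ioi.mp hy)]

lemma J_eq (w : ℝ) : J w = J 0 + ∫ t in (0:ℝ)..w, phi t := by
  rw [← intervalIntegral.integral_Iic_sub_Iic integrable_phi.integrableOn integrable_phi.integrableOn]
  unfold J; ring

lemma hasDerivAt_J (w : ℝ) : HasDerivAt J (phi w) w := by
  have h : HasDerivAt (fun u => J 0 + ∫ t in (0:ℝ)..u, phi t) (phi w) w := by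
    apply HasDerivAt.const_add
    exact intervalIntegral.integral_hasDerivAt_right
      integrable_phi.intervalIntegrable
      (continuous_phi.stronglyMeasurable.stronglyMeasurableAtFilter)
      continuous_phi.continuousAt
  exact h.congr_of_eventuallyEq (Eventually.of_forall fun u => J_eq u)

lemma hasDerivAt_I (w : ℝ) : HasDerivAt I (-phi w) w := by
  have h : HasDerivAt (fun u => Real.sqrt (2*π) - J u) (-phi w) w :=
    (hasDerivAt_J w).const_sub _
  refine h.congr_of_eventuallyEq (Eventually.of_forall fun u => ?_)
  show I u = Real.sqrt (2*π) - J u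
  have := J_add_I u; linarith

lemma I_le (w : ℝ) : I w ≤ Real.sqrt (2*π) := by
  have := J_add_I w; have := J_nonneg w; linarith
lemma J_le (w : ℝ) : J w ≤ Real.sqrt (2*π) := by
  have := J_add_I w; have := I_nonneg w; linarith

lemma I_tendsto : Tendsto I atTop (𝓝 0) := by
  apply tendsto_of_tendsto_of_tendsto_of_le_of_le' (g := fun _ => (0:ℝ))
    (h := fun w : ℝ => w⁻¹) tendsto_const_nhds tendsto_inv_atTop_zero
  · exact Eventually.of_forall fun w => I_nonneg w
  · filter_upwards [eventually_gt_atTop (0:ℝ)] with w hw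
    have h1 := tail w hw
    have h2 := phi_le_one w
    rw [show (w:ℝ)⁻¹ = 1/w by ring, le_div_iff₀ hw]
    nlinarith

lemma two_le_c : 2 ≤ π / Real.sqrt 2 := by
  have h2 : Real.sqrt 2 ≤ 1.5 := by
    rw [show (1.5:ℝ) = Real.sqrt (1.5^2) from (Real.sqrt_sq (by norm_num)).symm]
    exact Real.sqrt_le_sqrt (by norm_num)
  have h0 : (0:ℝ) < Real.sqrt 2 := Real.sqrt_pos.mpr (by norm_num)
  rw [le_div_iff₀ h0]
  nlinarith [Real.pi_gt_three]

lemma JI_le (w : ℝ) (hw : 0 ≤ w) : J w - I w ≤ 2 * w := by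
  set E := fun u => 2*u - (J u - I u) with hE
  have hD : ∀ u, HasDerivAt E (2 - 2 * phi u) u := by
    intro u
    have := ((hasDerivAt_id u).const_mul 2).sub ((hasDerivAt_J u).sub (hasDerivAt_I u))
    exact this.congr_deriv (by ring)
  have hmono : MonotoneOn E (Ici 0) := by
    apply monotoneOn_of_deriv_nonneg (convex_Ici 0)
      (fun u _ => (hD u).continuousAt.continuousWithinAt)
      (fun u _ => (hD u).differentiableAt.differentiableWithinAt)
    intro u _
    rw [(hD u).deriv]
    have := phi_le_one u; linarith
  have hE0 : E 0 = 0 := by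
    have : J 0 = I 0 := by rw [← I_neg 0, neg_zero]
    simp [hE, this]
  have := hmono (self_mem_Ici) (mem_Ici.mpr hw) hw
  rw [hE0] at this
  simp only [hE] at this ⊢
  linarith

lemma key_aux (w : ℝ) (hw : 0 ≤ w) : I w * J w ≤ (π / Real.sqrt 2) * phi w := by
  set c := π / Real.sqrt 2 with hc
  set D := fun u => c * phi u - I u * J u with hD
  have hDderiv : ∀ u, HasDerivAt D (phi u * (J u - I u - c * u)) u := by
    intro u
    have := ((hasDerivAt_phi u).const_mul c).sub ((hasDerivAt_I u).mul (hasDerivAt_J u))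
    exact this.congr_deriv (by ring)
  have hanti : AntitoneOn D (Ici 0) := by
    apply antitoneOn_of_deriv_nonpos (convex_Ici 0)
      (fun u _ => (hDderiv u).continuousAt.continuousWithinAt)
      (fun u _ => (hDderiv u).differentiableAt.differentiableWithinAt)
    intro u hu
    rw [interior_Ici] at hu
    rw [(hDderiv u).deriv]
    have h1 := JI_le u (le_of_lt hu)
    have h2 := two_le_c
    have h3 := phi_nonneg u
    have : J u - I u - c * u ≤ 0 := by nlinarith [mem_Ioi.mp hu]
    exact mul_nonpos_of_nonneg_of_nonpos h3 this
  have htend : Tendsto D atTop (𝓝 0) := by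
    have h1 : Tendsto (fun u => c * phi u) atTop (𝓝 0) := by
      simpa using phi_tendsto.const_mul c
    have h2 : Tendsto (fun u => I u * J u) atTop (𝓝 0) := by
      apply tendsto_of_tendsto_of_tendsto_of_le_of_le' (g := fun _ => (0:ℝ))
        (h := fun u => I u * Real.sqrt (2*π)) tendsto_const_nhds
        (by simpa using I_tendsto.mul_const (Real.sqrt (2*π)))
      · exact Eventually.of_forall fun u => mul_nonneg (I_nonneg u) (J_nonneg u)
      · exact Eventually.of_forall fun u =>
          mul_le_mul_of_nonneg_left (J_le u) (I_nonneg u)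
    simpa using h1.sub h2
  have h0 : 0 ≤ D w := by
    apply le_of_tendsto htend
    filter_upwards [eventually_ge_atTop w] with x hx
    exact hanti (mem_Ici.mpr hw) (mem_Ici.mpr (hw.trans hx)) hx
  simp only [hD] at h0
  linarith


lemma key (w : ℝ) : I w * J w ≤ (π / Real.sqrt 2) * phi w := by
  -- reduce to w ≥ 0
  rcases le_total 0 w with hw | hw
  case inr =>
    have h := key_aux (-w) (by linarith)
    rw [I_neg, J_neg, phi_even] at h
    linarith [h]
  case inl =>
    exact key_aux w hw


-- new part
lemma exp_phi (w : ℝ) : Real.exp (w^2/2) * phi w = 1 := by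
  rw [phi, ← Real.exp_add]
  ring_nf
  exact Real.exp_zero

lemma sqrt_two_pi_pos : 0 < Real.sqrt (2*π) :=
  Real.sqrt_pos.mpr (by positivity)

lemma const_eval : (π / Real.sqrt 2) / Real.sqrt (2*π) = Real.sqrt π / 2 := by
  have h2 : Real.sqrt (2*π) = Real.sqrt 2 * Real.sqrt π := Real.sqrt_mul (by norm_num) π
  have hs2 : Real.sqrt 2 * Real.sqrt 2 = 2 := Real.mul_self_sqrt (by norm_num)
  have hsp : Real.sqrt π * Real.sqrt π = π := Real.mul_self_sqrt Real.pi_pos.le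
  have h2p : (0:ℝ) < Real.sqrt 2 := Real.sqrt_pos.mpr (by norm_num)
  have hpp : (0:ℝ) < Real.sqrt π := Real.sqrt_pos.mpr Real.pi_pos
  rw [h2]
  rw [div_div, div_eq_div_iff (by positivity) (by positivity)]
  nlinarith [hs2, hsp]

noncomputable def G (h : ℝ → ℝ) (m : ℝ) (w : ℝ) : ℝ := ∫ y in Iic w, (h y - m) * phi y
noncomputable def SF (h : ℝ → ℝ) (m : ℝ) (w : ℝ) : ℝ := Real.exp (w^2/2) * G h m w

section SteinSol
variable {h : ℝ → ℝ} {m : ℝ} (hc : Continuous h) (h0 : ∀ x, 0 ≤ h x) (h1 : ∀ x, h x ≤ 1)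
  (hm0 : 0 ≤ m) (hm1 : m ≤ 1) (htot : ∫ y, (h y - m) * phi y = 0)

include hc h0 h1 hm0 hm1

lemma integrable_hm : Integrable (fun y => (h y - m) * phi y) := by
  apply Integrable.mono' integrable_phi
    (((hc.sub continuous_const).mul continuous_phi).aestronglyMeasurable)
  filter_upwards with y
  show ‖(h y - m) * phi y‖ ≤ phi y
  rw [norm_mul, Real.norm_eq_abs, Real.norm_eq_abs, abs_of_nonneg (phi_nonneg y)]
  have : |h y - m| ≤ 1 := abs_le.mpr ⟨by linarith [h0 y], by linarith [h1 y]⟩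
  nlinarith [phi_nonneg y, abs_nonneg (h y - m)]

lemma G_le_J (w : ℝ) : G h m w ≤ (1 - m) * J w := by
  rw [G, J, ← MeasureTheory.integral_const_mul]
  apply setIntegral_mono_on ((integrable_hm hc h0 h1 hm0 hm1).integrableOn)
    ((integrable_phi.integrableOn).const_mul _) measurableSet_Iic
  intro y _
  nlinarith [phi_nonneg y, h1 y]

lemma G_ge_J (w : ℝ) : -(m * J w) ≤ G h m w := by
  have hX : (-m) * J w ≤ G h m w := by
    rw [G, J, ← MeasureTheory.integral_const_mul]
    apply setIntegral_mono_on ((integrable_phi.integrableOn).const_mul _)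
      ((integrable_hm hc h0 h1 hm0 hm1).integrableOn) measurableSet_Iic
    intro y _
    nlinarith [phi_nonneg y, h0 y]
  linarith

lemma Ioi_ge (w : ℝ) : (-m) * I w ≤ ∫ y in Ioi w, (h y - m) * phi y := by
  rw [I, ← MeasureTheory.integral_const_mul]
  apply setIntegral_mono_on ((integrable_phi.integrableOn).const_mul _)
    ((integrable_hm hc h0 h1 hm0 hm1).integrableOn) measurableSet_Ioi
  intro y _
  nlinarith [phi_nonneg y, h0 y]

lemma Ioi_le (w : ℝ) : (∫ y in Ioi w, (h y - m) * phi y) ≤ (1-m) * I w := by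
  rw [I, ← MeasureTheory.integral_const_mul]
  apply setIntegral_mono_on ((integrable_hm hc h0 h1 hm0 hm1).integrableOn)
    ((integrable_phi.integrableOn).const_mul _) measurableSet_Ioi
  intro y _
  nlinarith [phi_nonneg y, h1 y]

include htot

lemma G_eq_Ioi (w : ℝ) : G h m w = -∫ y in Ioi w, (h y - m) * phi y := by
  have := intervalIntegral.integral_Iic_add_Ioi (b := w)
    ((integrable_hm hc h0 h1 hm0 hm1).integrableOn)
    ((integrable_hm hc h0 h1 hm0 hm1).integrableOn)
  rw [htot] at this
  rw [G]; linarith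

lemma G_le_I (w : ℝ) : G h m w ≤ m * I w := by
  rw [G_eq_Ioi hc h0 h1 hm0 hm1 htot]
  have := Ioi_ge hc h0 h1 hm0 hm1 w
  linarith

lemma G_ge_I (w : ℝ) : -((1 - m) * I w) ≤ G h m w := by
  rw [G_eq_Ioi hc h0 h1 hm0 hm1 htot]
  have := Ioi_le hc h0 h1 hm0 hm1 w
  linarith

lemma abs_G_le_IJ (w : ℝ) : |G h m w| * Real.sqrt (2*π) ≤ I w * J w := by
  have hs := J_add_I w
  have hIn := I_nonneg w
  have hJn := J_nonneg w
  have b1 := G_le_J hc h0 h1 hm0 hm1 w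
  have b2 := G_ge_J hc h0 h1 hm0 hm1 w
  have b3 := G_le_I hc h0 h1 hm0 hm1 htot w
  have b4 := G_ge_I hc h0 h1 hm0 hm1 htot w
  rcases abs_cases (G h m w) with ⟨he, _⟩ | ⟨he, _⟩ <;> rw [he] <;> nlinarith

lemma abs_G_le_I (w : ℝ) : |G h m w| ≤ I w := by
  have b3 := G_le_I hc h0 h1 hm0 hm1 htot w
  have b4 := G_ge_I hc h0 h1 hm0 hm1 htot w
  have := I_nonneg w
  rcases abs_cases (G h m w) with ⟨he, _⟩ | ⟨he, _⟩ <;> rw [he] <;> nlinarith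

lemma abs_G_le_J' (w : ℝ) : |G h m w| ≤ J w := by
  have b1 := G_le_J hc h0 h1 hm0 hm1 w
  have b2 := G_ge_J hc h0 h1 hm0 hm1 w
  have := J_nonneg w
  rcases abs_cases (G h m w) with ⟨he, _⟩ | ⟨he, _⟩ <;> rw [he] <;> nlinarith

lemma abs_SF_le (w : ℝ) : |SF h m w| ≤ Real.sqrt π / 2 := by
  have hE : (0:ℝ) < Real.exp (w^2/2) := Real.exp_pos _
  have h1' : |SF h m w| = Real.exp (w^2/2) * |G h m w| := by
    rw [SF, abs_mul, abs_of_pos hE]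
  have h2 := abs_G_le_IJ hc h0 h1 hm0 hm1 htot w
  have h3 := key w
  have h4 := exp_phi w
  have h5 := sqrt_two_pi_pos
  rw [h1', ← const_eval, le_div_iff₀ h5]
  have hGn : 0 ≤ |G h m w| := abs_nonneg _
  calc Real.exp (w^2/2) * |G h m w| * Real.sqrt (2*π)
      = Real.exp (w^2/2) * (|G h m w| * Real.sqrt (2*π)) := by ring
    _ ≤ Real.exp (w^2/2) * (I w * J w) := by
        apply mul_le_mul_of_nonneg_left h2 hE.le
    _ ≤ Real.exp (w^2/2) * ((π / Real.sqrt 2) * phi w) := by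
        apply mul_le_mul_of_nonneg_left h3 hE.le
    _ = (π / Real.sqrt 2) * (Real.exp (w^2/2) * phi w) := by ring
    _ = (π / Real.sqrt 2) := by rw [h4, mul_one]

lemma G_interval (w : ℝ) : G h m w = G h m 0 + ∫ t in (0:ℝ)..w, (h t - m) * phi t := by
  rw [← intervalIntegral.integral_Iic_sub_Iic ((integrable_hm hc h0 h1 hm0 hm1).integrableOn)
    ((integrable_hm hc h0 h1 hm0 hm1).integrableOn)]
  unfold G; ring

lemma hasDerivAt_G (w : ℝ) : HasDerivAt (G h m) ((h w - m) * phi w) w := by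
  have hcont : Continuous (fun y => (h y - m) * phi y) :=
    (hc.sub continuous_const).mul continuous_phi
  have hd : HasDerivAt (fun u => G h m 0 + ∫ t in (0:ℝ)..u, (h t - m) * phi t)
      ((h w - m) * phi w) w := by
    apply HasDerivAt.const_add
    exact intervalIntegral.integral_hasDerivAt_right
      (integrable_hm hc h0 h1 hm0 hm1).intervalIntegrable
      hcont.stronglyMeasurable.stronglyMeasurableAtFilter
      hcont.continuousAt
  exact hd.congr_of_eventuallyEq (Eventually.of_forall fun u => G_interval hc h0 h1 hm0 hm1 htot u)

lemma hasDerivAt_SF (w : ℝ) :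
    HasDerivAt (SF h m) (w * SF h m w + (h w - m)) w := by
  have he : HasDerivAt (fun u : ℝ => Real.exp (u^2/2)) (w * Real.exp (w^2/2)) w := by
    have h' : HasDerivAt (fun u : ℝ => u^2/2) w w := by
      have := (hasDerivAt_pow 2 w).div_const 2
      simpa using this.congr_deriv (by ring)
    simpa using h'.exp.congr_deriv (by ring)
  have := he.mul (hasDerivAt_G hc h0 h1 hm0 hm1 htot w)
  have h2 : HasDerivAt (SF h m)
      (w * Real.exp (w^2/2) * G h m w + Real.exp (w^2/2) * ((h w - m) * phi w)) w := by
    unfold SF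
    exact this
  have h3 : w * Real.exp (w^2/2) * G h m w + Real.exp (w^2/2) * ((h w - m) * phi w)
      = w * SF h m w + (h w - m) := by
    rw [SF]
    have h4 := exp_phi w
    linear_combination (h w - m) * h4
  rwa [h3] at h2

lemma deriv_SF (w : ℝ) : deriv (SF h m) w = w * SF h m w + (h w - m) :=
  (hasDerivAt_SF hc h0 h1 hm0 hm1 htot w).deriv

lemma continuous_SF : Continuous (SF h m) := by
  have : Differentiable ℝ (SF h m) :=
    fun w => (hasDerivAt_SF hc h0 h1 hm0 hm1 htot w).differentiableAt
  exact this.continuous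

lemma contDiff_SF : ContDiff ℝ 1 (SF h m) := by
  rw [contDiff_one_iff_deriv]
  refine ⟨fun w => (hasDerivAt_SF hc h0 h1 hm0 hm1 htot w).differentiableAt, ?_⟩
  have hd : deriv (SF h m) = fun w => w * SF h m w + (h w - m) :=
    funext fun w => deriv_SF hc h0 h1 hm0 hm1 htot w
  rw [hd]
  exact (continuous_id.mul (continuous_SF hc h0 h1 hm0 hm1 htot)).add (hc.sub continuous_const)

lemma abs_deriv_SF_le (w : ℝ) : |deriv (SF h m) w| ≤ 2 := by
  rw [deriv_SF hc h0 h1 hm0 hm1 htot]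
  have hhm : |h w - m| ≤ 1 := abs_le.mpr ⟨by linarith [h0 w], by linarith [h1 w]⟩
  have hwSF : |w * SF h m w| ≤ 1 := by
    have hE : (0:ℝ) < Real.exp (w^2/2) := Real.exp_pos _
    rcases lt_trichotomy w 0 with hw | hw | hw
    · have hG := abs_G_le_J' hc h0 h1 hm0 hm1 htot w
      have ht := tail (-w) (by linarith)
      rw [I_neg] at ht
      have hp : phi (-w) = phi w := phi_even w
      rw [hp] at ht
      have h4 := exp_phi w
      rw [abs_mul, SF, abs_mul, abs_of_pos hE, abs_of_neg hw]
      nlinarith [mul_le_mul_of_nonneg_left hG (mul_nonneg (neg_nonneg.mpr hw.le) hE.le),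
        mul_le_mul_of_nonneg_left ht hE.le, exp_phi w]
    · simp [hw]
    · have hG := abs_G_le_I hc h0 h1 hm0 hm1 htot w
      have ht := tail w hw
      rw [abs_mul, SF, abs_mul, abs_of_pos hE, abs_of_pos hw]
      nlinarith [mul_le_mul_of_nonneg_left hG (mul_nonneg hw.le hE.le),
        mul_le_mul_of_nonneg_left ht hE.le, exp_phi w]
  calc |w * SF h m w + (h w - m)| ≤ |w * SF h m w| + |h w - m| := abs_add_le _ _
    _ ≤ 2 := by linarith

end SteinSol


-- new material
lemma le_of_forall_pos_le_add' {a b : ℝ} (h : ∀ ε, 0 < ε → a ≤ b + ε) : a ≤ b := by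
  by_contra hc
  push_neg at hc
  have := h ((a-b)/2) (by linarith)
  linarith

lemma integral_gaussianReal_eq (f : ℝ → ℝ) :
    ∫ y, f y ∂(gaussianReal 0 1) = ∫ y, (Real.sqrt (2*π))⁻¹ * phi y * f y := by
  rw [gaussianReal_of_var_ne_zero 0 one_ne_zero]
  have hpdf : gaussianPDF 0 1
      = fun x => ((Real.toNNReal ((Real.sqrt (2*π))⁻¹ * phi x) : ℝ≥0) : ℝ≥0∞) := by
    funext x
    rw [gaussianPDF, ENNReal.ofReal]
    congr 1
    congr 1
    rw [gaussianPDFReal, phi]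
    norm_num
  rw [hpdf, integral_withDensity_eq_integral_smul
    (by exact (continuous_const.mul continuous_phi).measurable.real_toNNReal) f]
  congr 1
  funext x
  rw [NNReal.smul_def, Real.coe_toNNReal _ (mul_nonneg (by positivity) (phi_nonneg x)), smul_eq_mul]

section MainH
variable {h : ℝ → ℝ} (hc : Continuous h) (h0 : ∀ x, 0 ≤ h x) (h1 : ∀ x, h x ≤ 1)
include hc h0 h1

lemma integrable_h_phi : Integrable (fun y => h y * phi y) := by
  apply Integrable.mono' integrable_phi ((hc.mul continuous_phi).aestronglyMeasurable)
  filter_upwards with y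
  show ‖h y * phi y‖ ≤ phi y
  rw [norm_mul, Real.norm_eq_abs, Real.norm_eq_abs, abs_of_nonneg (phi_nonneg y),
    abs_of_nonneg (h0 y)]
  nlinarith [phi_nonneg y, h1 y, h0 y]

lemma integrable_h_gauss : Integrable h (gaussianReal 0 1) := by
  apply Integrable.mono' (integrable_const (1:ℝ)) hc.aestronglyMeasurable
  filter_upwards with y
  rw [Real.norm_eq_abs, abs_of_nonneg (h0 y)]
  exact h1 y

lemma m_nonneg : 0 ≤ ∫ y, h y ∂(gaussianReal 0 1) :=
  integral_nonneg h0

lemma m_le_one : ∫ y, h y ∂(gaussianReal 0 1) ≤ 1 := by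
  have := integral_mono (integrable_h_gauss hc h0 h1) (integrable_const (1:ℝ)) h1
  simpa using this

lemma htot_eq : ∫ y, (h y - (∫ z, h z ∂(gaussianReal 0 1))) * phi y = 0 := by
  set m := ∫ z, h z ∂(gaussianReal 0 1) with hm
  have h2 : m = (Real.sqrt (2*π))⁻¹ * ∫ y, h y * phi y := by
    rw [hm, integral_gaussianReal_eq, ← MeasureTheory.integral_const_mul]
    congr 1; funext y; ring
  have h3 : ∫ y, (h y - m) * phi y = (∫ y, h y * phi y) - m * Real.sqrt (2*π) := by
    have := MeasureTheory.integral_sub (integrable_h_phi hc h0 h1)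
      (integrable_phi.const_mul m)
    rw [← integral_phi, ← MeasureTheory.integral_const_mul]
    rw [← MeasureTheory.integral_sub (integrable_h_phi hc h0 h1)
      (integrable_phi.const_mul m)]
    congr 1; funext y; ring
  rw [h3, h2]
  have := sqrt_two_pi_pos
  field_simp
  ring

end MainH
end SteinAux

/-- Total variation distance between two Borel measures on `ℝ`. -/
noncomputable def dTV (μ ν : Measure ℝ) : ℝ :=
  ⨆ A : {A : Set ℝ // MeasurableSet A}, |(μ (A : Set ℝ)).toReal - (ν (A : Set ℝ)).toReal|

open SteinAux in
theorem stein_tv_bound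
    (Ω : Type*) [MeasurableSpace Ω] (P : Measure Ω) [IsProbabilityMeasure P]
    (F : Ω → ℝ) (hF : Measurable F) (hFint : Integrable F P) :
    dTV (Measure.map F P) (gaussianReal 0 1) ≤
      ⨆ g : {g : ℝ → ℝ // ContDiff ℝ 1 g ∧ (∀ x, |g x| ≤ Real.sqrt π / 2) ∧
          (∀ x, |deriv g x| ≤ 2)},
        |∫ ω, (deriv (g : ℝ → ℝ) (F ω) - F ω * (g : ℝ → ℝ) (F ω)) ∂P| := by
  classical
  set γ := gaussianReal 0 1 with hγ
  set μ := Measure.map F P with hμ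
  haveI hμprob : IsProbabilityMeasure μ := Measure.isProbabilityMeasure_map hF.aemeasurable
  set T := {g : ℝ → ℝ // ContDiff ℝ 1 g ∧ (∀ x, |g x| ≤ Real.sqrt π / 2) ∧
          (∀ x, |deriv g x| ≤ 2)} with hT
  set Sfun := fun g : T => |∫ ω, (deriv (g : ℝ → ℝ) (F ω) - F ω * (g : ℝ → ℝ) (F ω)) ∂P|
    with hSfun
  haveI : Nonempty T := ⟨⟨(fun _ => 0), contDiff_const, fun x => by
      simp only [abs_zero]; positivity, fun x => by simp⟩⟩
  -- boundedness of the RHS family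
  have hBdd : BddAbove (Set.range Sfun) := by
    refine ⟨2 + Real.sqrt π / 2 * ∫ ω, |F ω| ∂P, ?_⟩
    rintro x ⟨g, rfl⟩
    obtain ⟨hg1, hg2, hg3⟩ := g.2
    have i1 : Integrable (fun ω => deriv (g : ℝ → ℝ) (F ω)) P := by
      apply Integrable.mono' (integrable_const (2:ℝ))
        (((measurable_deriv _).comp hF).aestronglyMeasurable)
      filter_upwards with ω
      show ‖deriv (g : ℝ → ℝ) (F ω)‖ ≤ 2
      rw [Real.norm_eq_abs]
      exact (hg3 (F ω))
    have i2 : Integrable (fun ω => F ω * (g : ℝ → ℝ) (F ω)) P := by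
      apply Integrable.mono' (hFint.abs.mul_const (Real.sqrt π / 2))
        (hF.aestronglyMeasurable.mul
          ((hg1.continuous.measurable.comp hF).aestronglyMeasurable))
      filter_upwards with ω
      show ‖F ω * (g : ℝ → ℝ) (F ω)‖ ≤ |F ω| * (Real.sqrt π / 2)
      rw [norm_mul, Real.norm_eq_abs, Real.norm_eq_abs]
      exact mul_le_mul_of_nonneg_left (hg2 (F ω)) (abs_nonneg _)
    have hSg' : Sfun g = ‖∫ ω, (deriv (g : ℝ → ℝ) (F ω) - F ω * (g : ℝ → ℝ) (F ω)) ∂P‖ := by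
      rw [hSfun, Real.norm_eq_abs]
    calc Sfun g ≤ ∫ ω, ‖deriv (g : ℝ → ℝ) (F ω) - F ω * (g : ℝ → ℝ) (F ω)‖ ∂P := by
          rw [hSg']; exact norm_integral_le_integral_norm _
      _ ≤ ∫ ω, (2 + Real.sqrt π / 2 * |F ω|) ∂P := by
          apply integral_mono (i1.sub i2).norm
            ((integrable_const (2:ℝ)).add (hFint.abs.const_mul _))
          intro ω
          have : ‖deriv (g : ℝ → ℝ) (F ω) - F ω * (g : ℝ → ℝ) (F ω)‖
              ≤ |deriv (g : ℝ → ℝ) (F ω)| + |F ω * (g : ℝ → ℝ) (F ω)| := by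
            rw [Real.norm_eq_abs]; exact abs_sub _ _
          have h2 : |F ω * (g : ℝ → ℝ) (F ω)| ≤ |F ω| * (Real.sqrt π / 2) := by
            rw [abs_mul]
            exact mul_le_mul_of_nonneg_left (hg2 (F ω)) (abs_nonneg _)
          have h3 := hg3 (F ω)
          simp only [Pi.sub_apply, Pi.add_apply]
          linarith
      _ = 2 + Real.sqrt π / 2 * ∫ ω, |F ω| ∂P := by
          rw [MeasureTheory.integral_add (integrable_const _) (hFint.abs.const_mul _),
            MeasureTheory.integral_const, MeasureTheory.integral_const_mul]
          simp
  -- main bound per measurable set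
  have hmain : ∀ A : Set ℝ, MeasurableSet A →
      |(μ A).toReal - (γ A).toReal| ≤ iSup Sfun := by
    intro A hA
    apply le_of_forall_pos_le_add'
    intro ε hε
    set ρ := μ + γ with hρ
    have hρA : ρ A ≠ ⊤ := (measure_lt_top ρ A).ne
    have hδ : ENNReal.ofReal (ε/5) ≠ 0 := by
      simp [ENNReal.ofReal_eq_zero]; linarith
    obtain ⟨K, hKA, hKcomp, hKlt⟩ := hA.exists_isCompact_lt_add hρA hδ
    obtain ⟨U, hAU, hUopen, hUlt⟩ := A.exists_isOpen_lt_add hρA hδ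
    -- real-number versions
    have toReal_mono' : ∀ {s t : Set ℝ}, s ⊆ t → (μ s).toReal ≤ (μ t).toReal := by
      intro s t hst
      exact ENNReal.toReal_mono (measure_lt_top μ t).ne (measure_mono hst)
    have toReal_mono'' : ∀ {s t : Set ℝ}, s ⊆ t → (γ s).toReal ≤ (γ t).toReal := by
      intro s t hst
      exact ENNReal.toReal_mono (measure_lt_top γ t).ne (measure_mono hst)
    have erho : ∀ s : Set ℝ, (ρ s).toReal = (μ s).toReal + (γ s).toReal := by
      intro s
      rw [hρ, Measure.add_apply, ENNReal.toReal_add (by finiteness) (by finiteness)]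
    have hrhoK : (μ A).toReal + (γ A).toReal < (μ K).toReal + (γ K).toReal + ε/5 := by
      have h2 := ENNReal.toReal_strict_mono (by finiteness) hKlt
      rw [ENNReal.toReal_add (by finiteness) (by finiteness),
        ENNReal.toReal_ofReal (by linarith), erho A, erho K] at h2
      linarith
    have hrhoU : (μ U).toReal + (γ U).toReal < (μ A).toReal + (γ A).toReal + ε/5 := by
      have h2 := ENNReal.toReal_strict_mono (by finiteness) hUlt
      rw [ENNReal.toReal_add (by finiteness) (by finiteness),
        ENNReal.toReal_ofReal (by linarith), erho U, erho A] at h2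
      linarith
    have hμKA := toReal_mono' hKA
    have hμAU := toReal_mono' hAU
    have hγKA := toReal_mono'' hKA
    have hγAU := toReal_mono'' hAU
    -- Urysohn function
    have hdisj : Disjoint K Uᶜ :=
      Set.disjoint_left.mpr fun x hxK hxU => hxU (hAU (hKA hxK))
    obtain ⟨f₀, hf₀K, hf₀U, hf₀01⟩ :=
      exists_continuous_zero_one_of_isCompact hKcomp hUopen.isClosed_compl hdisj
    set h : ℝ → ℝ := fun x => 1 - f₀ x with hhdef
    have hc : Continuous h := continuous_const.sub f₀.continuous
    have h0 : ∀ x, 0 ≤ h x := fun x => by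
      have := (hf₀01 x).2; simp only [hhdef]; linarith
    have h1 : ∀ x, h x ≤ 1 := fun x => by
      have := (hf₀01 x).1; simp only [hhdef]; linarith
    have hK1 : ∀ x ∈ K, h x = 1 := fun x hx => by
      simp only [hhdef]; rw [hf₀K hx]; simp
    have hU0 : ∀ x ∈ Uᶜ, h x = 0 := fun x hx => by
      simp only [hhdef]; rw [hf₀U hx]; simp
    set m := ∫ y, h y ∂γ with hm
    have hm0 : 0 ≤ m := m_nonneg hc h0 h1
    have hm1 : m ≤ 1 := m_le_one hc h0 h1
    have htot : ∫ y, (h y - m) * phi y = 0 := htot_eq hc h0 h1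
    -- the Stein test function
    set g₀ : T := ⟨SF h m, contDiff_SF hc h0 h1 hm0 hm1 htot,
      fun x => abs_SF_le hc h0 h1 hm0 hm1 htot x,
      fun x => abs_deriv_SF_le hc h0 h1 hm0 hm1 htot x⟩ with hg₀
    have hle : Sfun g₀ ≤ iSup Sfun := le_ciSup hBdd g₀
    -- compute Sfun g₀
    have hint_hF : Integrable (fun ω => h (F ω)) P := by
      apply Integrable.mono' (integrable_const (1:ℝ))
        ((hc.measurable.comp hF).aestronglyMeasurable)
      filter_upwards with ω
      show ‖h (F ω)‖ ≤ 1
      rw [Real.norm_eq_abs, abs_of_nonneg (h0 (F ω))]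
      exact h1 (F ω)
    have hSg : Sfun g₀ = |(∫ y, h y ∂μ) - m| := by
      rw [hSfun]
      simp only [hg₀]
      congr 1
      have heq : ∀ ω, deriv (SF h m) (F ω) - F ω * SF h m (F ω) = h (F ω) - m := by
        intro ω
        rw [deriv_SF hc h0 h1 hm0 hm1 htot]
        ring
      rw [show (fun ω => deriv (SF h m) (F ω) - F ω * SF h m (F ω))
          = fun ω => h (F ω) - m from funext heq]
      rw [MeasureTheory.integral_sub hint_hF (integrable_const m),
        MeasureTheory.integral_const, hμ,
        integral_map hF.aemeasurable hc.aestronglyMeasurable]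
      simp
    have habs : |(∫ y, h y ∂μ) - m| ≤ iSup Sfun := hSg ▸ hle
    obtain ⟨habs1, habs2⟩ := abs_le.mp habs
    -- indicator comparisons
    have hKmeas : MeasurableSet K := hKcomp.isClosed.measurableSet
    have hUmeas : MeasurableSet U := hUopen.measurableSet
    have hι : Integrable h μ := by
      apply Integrable.mono' (integrable_const (1:ℝ)) hc.aestronglyMeasurable
      filter_upwards with y
      rw [Real.norm_eq_abs, abs_of_nonneg (h0 y)]
      exact h1 y
    have hιγ : Integrable h γ := by
      apply Integrable.mono' (integrable_const (1:ℝ)) hc.aestronglyMeasurable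
      filter_upwards with y
      rw [Real.norm_eq_abs, abs_of_nonneg (h0 y)]
      exact h1 y
    have hptK : ∀ y, K.indicator (fun _ => (1:ℝ)) y ≤ h y := by
      intro y
      by_cases hy : y ∈ K
      · rw [Set.indicator_of_mem hy, hK1 y hy]
      · rw [Set.indicator_of_notMem hy]; exact h0 y
    have hptU : ∀ y, h y ≤ U.indicator (fun _ => (1:ℝ)) y := by
      intro y
      by_cases hy : y ∈ U
      · rw [Set.indicator_of_mem hy]; exact h1 y
      · rw [Set.indicator_of_notMem hy, hU0 y hy]
    have hindKμ : (μ K).toReal ≤ ∫ y, h y ∂μ := by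
      have he := integral_indicator_const (μ := μ) (1:ℝ) hKmeas
      have := integral_mono ((integrable_const (1:ℝ)).indicator hKmeas) hι hptK
      rw [he] at this
      simpa [measureReal_def] using this
    have hindUμ : ∫ y, h y ∂μ ≤ (μ U).toReal := by
      have he := integral_indicator_const (μ := μ) (1:ℝ) hUmeas
      have := integral_mono hι ((integrable_const (1:ℝ)).indicator hUmeas) hptU
      rw [he] at this
      simpa [measureReal_def] using this
    have hindKγ : (γ K).toReal ≤ m := by
      have he := integral_indicator_const (μ := γ) (1:ℝ) hKmeas
      have := integral_mono ((integrable_const (1:ℝ)).indicator hKmeas) hιγ hptK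
      rw [he] at this
      rw [hm]
      simpa [measureReal_def] using this
    have hindUγ : m ≤ (γ U).toReal := by
      have he := integral_indicator_const (μ := γ) (1:ℝ) hUmeas
      have := integral_mono hιγ ((integrable_const (1:ℝ)).indicator hUmeas) hptU
      rw [he] at this
      rw [hm]
      simpa [measureReal_def] using this
    rw [abs_sub_le_iff]
    constructor <;> linarith [hindKμ, hindUμ, hindKγ, hindUγ, habs1, habs2, hμKA, hμAU,
      hγKA, hγAU, hrhoK, hrhoU]
  -- conclude
  haveI : Nonempty {A : Set ℝ // MeasurableSet A} := ⟨⟨∅, MeasurableSet.empty⟩⟩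
  rw [dTV]
  exact ciSup_le fun A => hmain A.1 A.2
end

section
/- Let K ⊂ ℝ^d be a nonempty compact convex set and let Π_K : ℝ^d → K be the metric projection onto K. At every point x ∈ ℝ^d where Π_K is differentiable, the derivative annihilates the outward vector: (∇Π_K(x))(x − Π_K(x)) = 0, where ∇Π_K(x) denotes the (Fréchet) derivative of Π_K at x. -/
open Metric

theorem proj_deriv_annihilates_outward (d : ℕ) (K : Set (EuclideanSpace ℝ (Fin d)))
    (hKcomp : IsCompact K) (hKconv : Convex ℝ K) (hKne : K.Nonempty)
    (proj : EuclideanSpace ℝ (Fin d) → EuclideanSpace ℝ (Fin d))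
    (hprojK : ∀ x, proj x ∈ K)
    (hproj : ∀ x, ‖x - proj x‖ = Metric.infDist x K)
    (x : EuclideanSpace ℝ (Fin d)) (hdiff : DifferentiableAt ℝ proj x) :
    fderiv ℝ proj x (x - proj x) = 0 := by
  set v := x - proj x with hv
  -- variational characterization at any point z
  have hchar : ∀ z, ∀ w ∈ K, inner ℝ (z - proj z) (w - proj z) ≤ (0:ℝ) := by
    intro z w hw
    have h1 : ‖z - proj z‖ = ⨅ w : K, ‖z - w‖ := by
      rw [hproj z, Metric.infDist_eq_iInf]
      simp_rw [dist_eq_norm]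
    exact (norm_eq_iInf_iff_real_inner_le_zero hKconv (hprojK z)).mp h1 w hw
  -- the projection is constant along the outward ray
  have key : ∀ t : ℝ, -1 ≤ t → proj (x + t • v) = proj x := by
    intro t ht
    set z := x + t • v with hzdef
    have hz : z - proj x = (1 + t) • v := by
      rw [hzdef, hv]; module
    have hineq : ∀ w ∈ K, inner ℝ (z - proj x) (w - proj x) ≤ (0:ℝ) := by
      intro w hw
      rw [hz, real_inner_smul_left]
      have h0 := hchar x w hw
      nlinarith
    have h1 := hchar z (proj x) (hprojK x)
    have h2 := hineq (proj z) (hprojK z)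
    have hexp : (inner ℝ (proj x - proj z) (proj x - proj z) : ℝ)
        = inner ℝ (z - proj z) (proj x - proj z)
          + inner ℝ (proj x - z) (proj x - proj z) := by
      rw [← inner_add_left]
      congr 1
      abel
    have h3 : (inner ℝ (proj x - z) (proj x - proj z) : ℝ) = inner ℝ (z - proj x) (proj z - proj x) := by
      rw [show proj x - z = -(z - proj x) by abel, show proj x - proj z = -(proj z - proj x) by abel,
        inner_neg_neg]
    have h4 : inner ℝ (proj x - proj z) (proj x - proj z) ≤ (0:ℝ) := by
      rw [hexp, h3]
      linarith
    have h5 : proj x - proj z = 0 := by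
      have := real_inner_self_nonpos.mp h4
      exact this
    symm
    exact sub_eq_zero.mp h5
  -- conclude via derivatives
  have hd : HasFDerivAt proj (fderiv ℝ proj x) x := hdiff.hasFDerivAt
  have hline : HasDerivAt (fun t : ℝ => x + t • v) v 0 := by
    simpa using ((hasDerivAt_id (0:ℝ)).smul_const v).const_add x
  have hcomp : HasDerivAt (fun t : ℝ => proj (x + t • v)) (fderiv ℝ proj x v) 0 := by
    have hd' : HasFDerivAt proj (fderiv ℝ proj x) (x + (0:ℝ) • v) := by simpa using hd
    exact hd'.comp_hasDerivAt 0 hline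
  have heq : (fun t : ℝ => proj (x + t • v)) =ᶠ[nhds 0] fun _ => proj x := by
    filter_upwards [Ioo_mem_nhds (by norm_num : (-1:ℝ) < 0) one_pos] with t ht
    exact key t ht.1.le
  have hconst : HasDerivAt (fun t : ℝ => proj (x + t • v)) 0 0 :=
    (hasDerivAt_const (0:ℝ) (proj x)).congr_of_eventuallyEq heq
  exact hcomp.unique hconst
end

section
/- Let c > 0, α ∈ [0, 1/2), and θ > 0 with ln(√(2π)/θ) < −1. For each d ≥ 1 let K_d ⊂ ℝ^d be a convex body contained in the centered Euclidean ball of radius c·d^α, and let X_{K_d} be distributed according to the Hadwiger–Wills density of K_d. Then P( dist(X_{K_d}, K_d) ≤ √d/θ ) = o(e^{−d/2}) as d → ∞; that is, e^{d/2}·P( dist(X_{K_d}, K_d) ≤ √d/θ ) → 0. -/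
open MeasureTheory Metric Real
open scoped ENNReal NNReal

lemma gauss_integrable (d : ℕ) :
    Integrable (fun v : EuclideanSpace ℝ (Fin d) => rexp (-π * ‖v‖^2)) := by
  have h := (GaussianFourier.integrable_cexp_neg_mul_sq_norm_add
    (V := EuclideanSpace ℝ (Fin d)) (b := (π : ℂ)) (by simpa using pi_pos) 0 0).re
  refine h.congr (Filter.Eventually.of_forall fun v => ?_)
  simp only [zero_mul, add_zero, RCLike.re_to_complex]
  rw [show -(π:ℂ) * (‖v‖:ℂ)^2 = ((-π * ‖v‖^2 : ℝ) : ℂ) by push_cast; ring,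
    ← Complex.ofReal_exp, Complex.ofReal_re]

lemma gauss_integral (d : ℕ) :
    ∫ v : EuclideanSpace ℝ (Fin d), rexp (-π * ‖v‖^2) = 1 := by
  rw [GaussianFourier.integral_rexp_neg_mul_sq_norm pi_pos]
  rw [div_self pi_ne_zero, Real.one_rpow]

lemma measure_bound {d : ℕ} (hd : 1 ≤ d) {K : Set (EuclideanSpace ℝ (Fin d))}
    (hKcomp : IsCompact K) (hKne : K.Nonempty)
    {R r : ℝ} (hR : 0 ≤ R) (hr : 0 ≤ r) (hKball : K ⊆ Metric.closedBall 0 R)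
    {Ω : Type} [MeasurableSpace Ω] (P : Measure Ω) [IsProbabilityMeasure P]
    (X : Ω → EuclideanSpace ℝ (Fin d)) (hX : Measurable X)
    (hlaw : Measure.map X P = volume.withDensity (fun x =>
      ENNReal.ofReal (Real.exp (-π * Metric.infDist x K ^ 2) /
        ∫ y : EuclideanSpace ℝ (Fin d), Real.exp (-π * Metric.infDist y K ^ 2)))) :
    ((P {ω | Metric.infDist (X ω) K ≤ r})).toReal ≤
      (R + r)^d * (Real.sqrt π ^ d / Real.Gamma ((d:ℝ)/2 + 1)) := by
  haveI : Nonempty (Fin d) := ⟨⟨0, hd⟩⟩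
  set f : EuclideanSpace ℝ (Fin d) → ℝ := fun x => rexp (-π * infDist x K ^ 2) with hfdef
  set W : ℝ := ∫ y, f y with hWdef
  have hS : MeasurableSet {x : EuclideanSpace ℝ (Fin d) | infDist x K ≤ r} :=
    (isClosed_le (continuous_infDist_pt K) continuous_const).measurableSet
  have hmap : P {ω | infDist (X ω) K ≤ r}
      = (Measure.map X P) {x | infDist x K ≤ r} := by
    rw [Measure.map_apply hX hS]; rfl
  by_cases hf : Integrable f volume
  · -- W ≥ 1
    obtain ⟨x0, hx0⟩ := id hKne
    have hint : Integrable (fun y : EuclideanSpace ℝ (Fin d) => rexp (-π * ‖y - x0‖^2)) :=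
      (gauss_integrable d).comp_sub_right x0
    have hle : (fun y : EuclideanSpace ℝ (Fin d) => rexp (-π * ‖y - x0‖^2)) ≤ f := by
      intro y
      apply Real.exp_le_exp.mpr
      have h1 : infDist y K ≤ ‖y - x0‖ := by
        rw [← dist_eq_norm]; exact infDist_le_dist_of_mem hx0
      have h2 : (0:ℝ) ≤ infDist y K := infDist_nonneg
      nlinarith [pow_le_pow_left₀ h2 h1 2, pi_pos]
    have hW1 : (1:ℝ) ≤ W := by
      calc (1:ℝ) = ∫ y : EuclideanSpace ℝ (Fin d), rexp (-π * ‖y - x0‖^2) := by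
            rw [integral_sub_right_eq_self (fun y : EuclideanSpace ℝ (Fin d) =>
              rexp (-π * ‖y‖^2)) x0, gauss_integral d]
        _ ≤ W := integral_mono hint hf hle
    have hW0 : (0:ℝ) < W := lt_of_lt_of_le one_pos hW1
    have hdens : ∀ x, ENNReal.ofReal (f x / W) ≤ 1 := by
      intro x
      rw [show (1:ℝ≥0∞) = ENNReal.ofReal 1 by simp]
      apply ENNReal.ofReal_le_ofReal
      rw [div_le_one hW0]
      refine le_trans ?_ hW1
      have hnn : (0:ℝ) ≤ π * infDist x K ^ 2 := by positivity
      exact Real.exp_le_one_iff.mpr (by linarith)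
    have hsub : {x : EuclideanSpace ℝ (Fin d) | infDist x K ≤ r}
        ⊆ Metric.closedBall 0 (R + r) := by
      intro x hx
      obtain ⟨z, hz, hzd⟩ := hKcomp.exists_infDist_eq_dist hKne x
      have hzR : dist z 0 ≤ R := by simpa [Metric.mem_closedBall] using hKball hz
      have : dist x 0 ≤ dist x z + dist z 0 := dist_triangle x z 0
      have hxz : dist x z ≤ r := by rw [← hzd]; exact hx
      rw [Metric.mem_closedBall]
      linarith
    have key : P {ω | infDist (X ω) K ≤ r} ≤ volume (Metric.closedBall
        (0 : EuclideanSpace ℝ (Fin d)) (R + r)) := by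
      rw [hmap, hlaw]
      calc (volume.withDensity fun x => ENNReal.ofReal (f x / W))
            {x | infDist x K ≤ r}
          = ∫⁻ x in {x | infDist x K ≤ r}, ENNReal.ofReal (f x / W) :=
            withDensity_apply _ hS
        _ ≤ ∫⁻ _x in {x | infDist x K ≤ r}, 1 :=
            lintegral_mono fun x => hdens x
        _ = volume {x : EuclideanSpace ℝ (Fin d) | infDist x K ≤ r} := setLIntegral_one _
        _ ≤ _ := measure_mono hsub
    have hvol : (volume (Metric.closedBall (0 : EuclideanSpace ℝ (Fin d)) (R + r))).toReal
        = (R + r)^d * (Real.sqrt π ^ d / Real.Gamma ((d:ℝ)/2 + 1)) := by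
      rw [EuclideanSpace.volume_closedBall]
      have hG : (0:ℝ) < Real.Gamma ((d:ℝ)/2 + 1) :=
        Real.Gamma_pos_of_pos (by positivity)
      rw [ENNReal.toReal_mul, ENNReal.toReal_pow, ENNReal.toReal_ofReal (by linarith),
        ENNReal.toReal_ofReal (by positivity)]
      simp [Fintype.card_fin]
    rw [← hvol]
    exact ENNReal.toReal_mono measure_closedBall_lt_top.ne key
  · exfalso
    have hW : W = 0 := integral_undef hf
    have h1 : (Measure.map X P) Set.univ = 1 := by
      rw [Measure.map_apply hX MeasurableSet.univ]; simp
    rw [hlaw] at h1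
    rw [show (fun x : EuclideanSpace ℝ (Fin d) => ENNReal.ofReal (f x / W))
        = (fun _ => (0:ℝ≥0∞)) from funext fun x => by
        rw [hW, div_zero, ENNReal.ofReal_zero]] at h1
    rw [show (fun _ : EuclideanSpace ℝ (Fin d) => (0:ℝ≥0∞)) = 0 from rfl,
      withDensity_zero] at h1
    simp at h1


set_option maxHeartbeats 1000000 in
lemma analytic_bound (c : ℝ) (hc : 0 < c) (α : ℝ) (hα : α ∈ Set.Ico (0:ℝ) (1/2))
    (θ : ℝ) (hθ : 0 < θ) (hθ' : Real.log (Real.sqrt (2 * π) / θ) < -1) :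
    ∃ r : ℝ, 0 < r ∧ r < 1 ∧ ∀ᶠ d : ℕ in Filter.atTop,
      Real.exp ((d:ℝ)/2) * ((c * (d:ℝ)^α + Real.sqrt d / θ)^d *
        (Real.sqrt π ^ d / Real.Gamma ((d:ℝ)/2 + 1))) ≤ (d:ℝ) * r^d := by
  have hπ : (0:ℝ) < π := pi_pos
  -- numeric setup
  have hq : Real.sqrt (2*π)/θ < Real.exp (-1) := by
    have h0 : (0:ℝ) < Real.sqrt (2*π)/θ := by positivity
    exact (Real.log_lt_iff_lt_exp h0).mp hθ'
  set B : ℝ := 2*π*(Real.exp 1)^2/θ^2 with hBdef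
  have hB0 : 0 < B := by positivity
  have hB1 : B < 1 := by
    have hs : Real.sqrt (2*π)^2 = 2*π := Real.sq_sqrt (by positivity)
    have h0 : (0:ℝ) ≤ Real.sqrt (2*π)/θ := by positivity
    have hsq : (Real.sqrt (2*π)/θ)^2 < Real.exp (-1)^2 := by nlinarith [Real.exp_pos (-1)]
    have he : Real.exp (-1) * Real.exp 1 = 1 := by
      rw [← Real.exp_add]; norm_num
    have he2 : Real.exp (-1)^2 * Real.exp 1^2 = 1 := by nlinarith
    have h2 : 2*π/θ^2 < Real.exp (-1)^2 := by
      calc 2*π/θ^2 = (Real.sqrt (2*π)/θ)^2 := by rw [div_pow, hs]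
        _ < _ := hsq
    calc B = 2*π/θ^2 * Real.exp 1^2 := by rw [hBdef]; ring
      _ < Real.exp (-1)^2 * Real.exp 1^2 := by
          have : (0:ℝ) < Real.exp 1^2 := by positivity
          nlinarith
      _ = 1 := he2
  set ε : ℝ := min 1 ((1-B)/8) with hεdef
  have hε0 : 0 < ε := lt_min one_pos (by linarith)
  have hε1 : ε ≤ 1 := min_le_left _ _
  have hε8 : ε ≤ (1-B)/8 := min_le_right _ _
  set Q : ℝ := B * (1+ε)^3 with hQdef
  have hQ0 : 0 < Q := by positivity
  have hQ1 : Q < 1 := by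
    have h3 : (1+ε)^3 ≤ 1 + 7*ε := by nlinarith [sq_nonneg ε, hε0.le, hε1]
    have h4 : B*(1+ε)^3 ≤ B*(1+7*ε) := by nlinarith
    have h5 : ε*B ≤ ε := by nlinarith
    have : B*(1+7*ε) = B + 7*(ε*B) := by ring
    calc Q ≤ B*(1+7*ε) := h4
      _ = B + 7*(ε*B) := by ring
      _ ≤ B + 7*ε := by linarith
      _ ≤ B + 7*((1-B)/8) := by linarith
      _ < 1 := by linarith
  refine ⟨Real.sqrt Q, Real.sqrt_pos.mpr hQ0, ?_, ?_⟩
  · calc Real.sqrt Q < Real.sqrt 1 := Real.sqrt_lt_sqrt hQ0.le hQ1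
      _ = 1 := Real.sqrt_one
  -- eventual facts
  have h1π : (1:ℝ) < Real.sqrt π := by
    rw [show (1:ℝ) = Real.sqrt 1 by simp]
    exact Real.sqrt_lt_sqrt (by norm_num) (by linarith [Real.pi_gt_three])
  obtain ⟨N1, hN1⟩ := Filter.eventually_atTop.mp
    (Stirling.tendsto_stirlingSeq_sqrt_pi.eventually_const_lt h1π)
  set v : ℝ := 2 * Real.exp 1 * (1+ε) with hvdef
  have hv1 : (1:ℝ) ≤ v := by nlinarith [Real.one_le_exp (zero_le_one)]
  set u : ℝ := (1+ε)/θ with hudef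
  have hu0 : 0 < u := by positivity
  have hev1 : ∀ᶠ d : ℕ in Filter.atTop, (2*N1 + 2 : ℕ) ≤ d := Filter.eventually_ge_atTop _
  have hev2 : ∀ᶠ d : ℕ in Filter.atTop, (c*θ/ε) ≤ (d:ℝ)^((1:ℝ)/2-α) :=
    ((tendsto_rpow_atTop (by linarith [hα.2] : (0:ℝ) < 1/2-α)).comp
      tendsto_natCast_atTop_atTop).eventually_ge_atTop _
  have hev3 : ∀ᶠ d : ℕ in Filter.atTop, v ≤ (d:ℝ) :=
    tendsto_natCast_atTop_atTop.eventually_ge_atTop v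
  have hev4 : ∀ᶠ d : ℕ in Filter.atTop, (1+ε)/ε ≤ (d:ℝ) :=
    tendsto_natCast_atTop_atTop.eventually_ge_atTop _
  filter_upwards [hev1, hev2, hev3, hev4] with d hd1 hd2 hd3 hd4
  set m : ℕ := d / 2 with hmdef
  have hd2' : 2 ≤ d := by omega
  have hD1 : (1:ℝ) ≤ (d:ℝ) := by exact_mod_cast Nat.one_le_cast.mpr (by omega)
  have hD0 : (0:ℝ) < (d:ℝ) := by linarith
  have hm1 : 1 ≤ m := by omega
  have hmN : N1 ≤ m := by omega
  have hM1 : (1:ℝ) ≤ (m:ℝ) := by exact_mod_cast Nat.one_le_cast.mpr hm1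
  have h2m : 2*(m:ℝ) ≤ (d:ℝ) := by
    have : 2*m ≤ d := by omega
    exact_mod_cast this
  have hd2m : (d:ℝ) ≤ 2*(m:ℝ)+1 := by
    have : d ≤ 2*m+1 := by omega
    exact_mod_cast this
  -- Gamma lower bound
  have hGpos : 0 < Real.Gamma ((d:ℝ)/2+1) := Real.Gamma_pos_of_pos (by positivity)
  have hGam : ((m:ℕ).factorial : ℝ) ≤ Real.Gamma ((d:ℝ)/2+1) := by
    have h1 : Real.Gamma ((m:ℝ)+1) ≤ Real.Gamma ((d:ℝ)/2+1) :=
      Real.Gamma_strictMonoOn_Ici.monotoneOn (by simp only [Set.mem_Ici]; linarith)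
        (by simp only [Set.mem_Ici]; linarith) (by linarith)
    rwa [Real.Gamma_nat_eq_factorial] at h1
  have hden : (0:ℝ) < Real.sqrt (2*(m:ℝ)) * ((m:ℝ)/Real.exp 1)^m := by positivity
  have hst : (1:ℝ) < ((m:ℕ).factorial : ℝ) / (Real.sqrt (2*(m:ℝ)) * ((m:ℝ)/Real.exp 1)^m) := by
    have := hN1 m hmN
    rwa [Stirling.stirlingSeq] at this
  have hsq1 : (1:ℝ) ≤ Real.sqrt (2*(m:ℝ)) := by
    rw [show (1:ℝ) = Real.sqrt 1 by simp]
    exact Real.sqrt_le_sqrt (by linarith)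
  have hMe : ((m:ℝ)/Real.exp 1)^m ≤ ((m:ℕ).factorial : ℝ) := by
    have h2 := (one_lt_div hden).mp hst
    have h3 : ((m:ℝ)/Real.exp 1)^m ≤ Real.sqrt (2*(m:ℝ)) * ((m:ℝ)/Real.exp 1)^m :=
      le_mul_of_one_le_left (pow_nonneg (by positivity) m) hsq1
    linarith
  have hMepos : (0:ℝ) < ((m:ℝ)/Real.exp 1)^m := by positivity
  have hG : ((m:ℝ)/Real.exp 1)^m ≤ Real.Gamma ((d:ℝ)/2+1) := le_trans hMe hGam
  -- step A : division bound
  have hstepA : Real.sqrt π ^ d / Real.Gamma ((d:ℝ)/2+1)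
      ≤ Real.sqrt π ^ d * ((Real.exp 1/(m:ℝ))^m) := by
    calc Real.sqrt π ^ d / Real.Gamma ((d:ℝ)/2+1)
        ≤ Real.sqrt π ^ d / ((m:ℝ)/Real.exp 1)^m := by gcongr
      _ = Real.sqrt π ^ d * ((Real.exp 1/(m:ℝ))^m) := by
          rw [div_eq_mul_inv, ← inv_pow, inv_div]
  -- step B : radius bound
  have hcd : c * (d:ℝ)^α ≤ (ε/θ) * Real.sqrt d := by
    have hsp : Real.sqrt (d:ℝ) = (d:ℝ)^((1:ℝ)/2) := Real.sqrt_eq_rpow _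
    have hsplit : (d:ℝ)^((1:ℝ)/2) = (d:ℝ)^((1:ℝ)/2-α) * (d:ℝ)^α := by
      rw [← Real.rpow_add hD0]; congr 1; ring
    have hα0 : (0:ℝ) ≤ (d:ℝ)^α := Real.rpow_nonneg hD0.le α
    have h2 : (c*θ/ε) * (d:ℝ)^α ≤ (d:ℝ)^((1:ℝ)/2-α) * (d:ℝ)^α :=
      mul_le_mul_of_nonneg_right hd2 hα0
    have h3 : (ε/θ) * ((c*θ/ε) * (d:ℝ)^α) ≤ (ε/θ) * ((d:ℝ)^((1:ℝ)/2-α) * (d:ℝ)^α) :=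
      mul_le_mul_of_nonneg_left h2 (by positivity)
    have h4 : (ε/θ) * ((c*θ/ε) * (d:ℝ)^α) = c * (d:ℝ)^α := by
      field_simp
    rw [hsp, hsplit]
    calc c * (d:ℝ)^α = (ε/θ) * ((c*θ/ε) * (d:ℝ)^α) := h4.symm
      _ ≤ _ := h3
      _ = (ε/θ) * ((d:ℝ)^((1:ℝ)/2-α) * (d:ℝ)^α) := rfl
  have hs0 : (0:ℝ) ≤ c * (d:ℝ)^α + Real.sqrt d / θ := by positivity
  have hsu : c * (d:ℝ)^α + Real.sqrt d / θ ≤ Real.sqrt d * u := by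
    have : Real.sqrt (d:ℝ) * u = (ε/θ) * Real.sqrt d + Real.sqrt d / θ := by
      rw [hudef]; field_simp; ring
    rw [this]
    linarith
  have hstepB : (c * (d:ℝ)^α + Real.sqrt d / θ)^d ≤ (Real.sqrt d * u)^d :=
    pow_le_pow_left₀ hs0 hsu d
  -- step C : (e/m)^m  bound
  have hvD0 : (0:ℝ) < v/(d:ℝ) := by positivity
  have hvD1 : v/(d:ℝ) ≤ 1 := (div_le_one hD0).mpr hd3
  have hεD : 1+ε ≤ (d:ℝ)*ε := by
    have := (div_le_iff₀ hε0).mp hd4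
    linarith
  have hb2 : Real.exp 1/(m:ℝ) ≤ v/(d:ℝ) := by
    have hexp1 : (1+ε)*((d:ℝ)-1) = (d:ℝ) - 1 + (d:ℝ)*ε - ε := by ring
    have h5 : (d:ℝ) ≤ (1+ε)*((d:ℝ)-1) := by linarith
    have hA : Real.exp 1 * (d:ℝ) ≤ Real.exp 1 * ((1+ε)*((d:ℝ)-1)) :=
      mul_le_mul_of_nonneg_left h5 (Real.exp_nonneg 1)
    have hB2 : (1+ε)*((d:ℝ)-1) ≤ (1+ε)*(2*(m:ℝ)) :=
      mul_le_mul_of_nonneg_left (by linarith) (by linarith)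
    have hC2 : Real.exp 1 * ((1+ε)*((d:ℝ)-1)) ≤ Real.exp 1 * ((1+ε)*(2*(m:ℝ))) :=
      mul_le_mul_of_nonneg_left hB2 (Real.exp_nonneg 1)
    have hvM : v*(m:ℝ) = Real.exp 1 * ((1+ε)*(2*(m:ℝ))) := by rw [hvdef]; ring
    refine (div_le_div_iff₀ (by linarith : (0:ℝ) < (m:ℝ)) hD0).mpr ?_
    linarith
  have h31 : (Real.exp 1/(m:ℝ))^m ≤ (v/(d:ℝ))^m := pow_le_pow_left₀ (by positivity) hb2 m
  have h33 : (v/(d:ℝ))^((m:ℝ)) ≤ (v/(d:ℝ))^(((d:ℝ)-1)/2) :=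
    Real.rpow_le_rpow_of_exponent_ge hvD0 hvD1 (by linarith)
  have h34 : (v/(d:ℝ))^(((d:ℝ)-1)/2) = (v/(d:ℝ))^((d:ℝ)/2) * (v/(d:ℝ))^(-((1:ℝ)/2)) := by
    rw [← Real.rpow_add hvD0]; congr 1; ring
  have h35 : (v/(d:ℝ))^(-((1:ℝ)/2)) ≤ Real.sqrt d := by
    rw [Real.rpow_neg hvD0.le, ← Real.inv_rpow hvD0.le, inv_div]
    calc ((d:ℝ)/v)^((1:ℝ)/2) ≤ (d:ℝ)^((1:ℝ)/2) :=
          Real.rpow_le_rpow (by positivity) (div_le_self hD0.le hv1) (by norm_num)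
      _ = Real.sqrt d := (Real.sqrt_eq_rpow _).symm
  have hstepC : (Real.exp 1/(m:ℝ))^m ≤ (v/(d:ℝ))^((d:ℝ)/2) * Real.sqrt d := by
    calc (Real.exp 1/(m:ℝ))^m ≤ (v/(d:ℝ))^m := h31
      _ = (v/(d:ℝ))^((m:ℝ)) := (Real.rpow_natCast _ m).symm
      _ ≤ (v/(d:ℝ))^(((d:ℝ)-1)/2) := h33
      _ = (v/(d:ℝ))^((d:ℝ)/2) * (v/(d:ℝ))^(-((1:ℝ)/2)) := h34
      _ ≤ (v/(d:ℝ))^((d:ℝ)/2) * Real.sqrt d :=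
          mul_le_mul_of_nonneg_left h35 (Real.rpow_nonneg hvD0.le _)
  -- assemble
  have hmain : Real.exp ((d:ℝ)/2) * ((c * (d:ℝ)^α + Real.sqrt d / θ)^d *
      (Real.sqrt π ^ d / Real.Gamma ((d:ℝ)/2 + 1)))
      ≤ Real.exp ((d:ℝ)/2) * ((Real.sqrt d * u)^d *
        (Real.sqrt π ^ d * ((v/(d:ℝ))^((d:ℝ)/2) * Real.sqrt d))) := by
    refine mul_le_mul_of_nonneg_left ?_ (Real.exp_nonneg _)
    refine mul_le_mul hstepB ?_ (by positivity) (by positivity)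
    calc Real.sqrt π ^ d / Real.Gamma ((d:ℝ)/2+1)
        ≤ Real.sqrt π ^ d * ((Real.exp 1/(m:ℝ))^m) := hstepA
      _ ≤ Real.sqrt π ^ d * ((v/(d:ℝ))^((d:ℝ)/2) * Real.sqrt d) :=
          mul_le_mul_of_nonneg_left hstepC (by positivity)
  refine le_trans hmain ?_
  -- equality manipulation
  have e2 : (Real.sqrt (d:ℝ))^d = (d:ℝ)^((d:ℝ)/2) := by
    rw [← Real.rpow_natCast (Real.sqrt (d:ℝ)) d, Real.sqrt_eq_rpow,
      ← Real.rpow_mul hD0.le]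
    congr 1; ring
  have e3 : (Real.sqrt π)^d = π^((d:ℝ)/2) := by
    rw [← Real.rpow_natCast (Real.sqrt π) d, Real.sqrt_eq_rpow, ← Real.rpow_mul hπ.le]
    congr 1; ring
  have e4 : u^d = (u^2)^((d:ℝ)/2) := by
    rw [← Real.rpow_natCast u d, ← Real.rpow_two, ← Real.rpow_mul hu0.le]
    congr 1; ring
  have e5 : (Real.sqrt Q)^d = Q^((d:ℝ)/2) := by
    rw [← Real.rpow_natCast (Real.sqrt Q) d, Real.sqrt_eq_rpow, ← Real.rpow_mul hQ0.le]
    congr 1; ring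
  have e6 : Real.exp ((d:ℝ)/2) = Real.exp 1 ^ ((d:ℝ)/2) := (Real.exp_one_rpow _).symm
  have e7 : Real.exp 1^((d:ℝ)/2) * ((d:ℝ)^((d:ℝ)/2) * ((u^2)^((d:ℝ)/2) *
      (π^((d:ℝ)/2) * (v/(d:ℝ))^((d:ℝ)/2)))) = Q^((d:ℝ)/2) := by
    rw [← Real.mul_rpow hπ.le hvD0.le, ← Real.mul_rpow (by positivity) (by positivity),
      ← Real.mul_rpow hD0.le (by positivity), ← Real.mul_rpow (Real.exp_nonneg 1) (by positivity)]
    congr 1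
    have he22 : Real.exp 2 = Real.exp 1 ^ 2 := by rw [sq, ← Real.exp_add]; norm_num
    rw [hQdef, hBdef, hudef, hvdef]
    field_simp
  calc Real.exp ((d:ℝ)/2) * ((Real.sqrt d * u)^d *
        (Real.sqrt π ^ d * ((v/(d:ℝ))^((d:ℝ)/2) * Real.sqrt d)))
      = Real.sqrt d * (Real.exp 1^((d:ℝ)/2) * ((d:ℝ)^((d:ℝ)/2) * ((u^2)^((d:ℝ)/2) *
          (π^((d:ℝ)/2) * (v/(d:ℝ))^((d:ℝ)/2))))) := by
        rw [e6, mul_pow, e2, e3, e4]; ring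
    _ = Real.sqrt d * Q^((d:ℝ)/2) := by rw [e7]
    _ = Real.sqrt d * (Real.sqrt Q)^d := by rw [e5]
    _ ≤ (d:ℝ) * (Real.sqrt Q)^d := by
        have hsd : Real.sqrt (d:ℝ) ≤ (d:ℝ) := by
          rw [Real.sqrt_eq_rpow]
          calc (d:ℝ)^((1:ℝ)/2) ≤ (d:ℝ)^(1:ℝ) :=
            Real.rpow_le_rpow_of_exponent_le hD1 (by norm_num)
            _ = (d:ℝ) := Real.rpow_one _
        exact mul_le_mul_of_nonneg_right hsd (pow_nonneg (Real.sqrt_nonneg _) _)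


theorem dist_small_ball_exponentially_negligible
    (c : ℝ) (hc : 0 < c) (α : ℝ) (hα : α ∈ Set.Ico (0:ℝ) (1/2))
    (θ : ℝ) (hθ : 0 < θ) (hθ' : Real.log (Real.sqrt (2 * π) / θ) < -1)
    (K : (d : ℕ) → Set (EuclideanSpace ℝ (Fin d)))
    (hKcomp : ∀ d, 1 ≤ d → IsCompact (K d))
    (hKconv : ∀ d, 1 ≤ d → Convex ℝ (K d))
    (hKint : ∀ d, 1 ≤ d → (interior (K d)).Nonempty)
    (hKball : ∀ d, 1 ≤ d → K d ⊆ Metric.closedBall 0 (c * (d : ℝ) ^ α))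
    (Ω : (d : ℕ) → Type) (mΩ : ∀ d, MeasurableSpace (Ω d))
    (P : (d : ℕ) → Measure (Ω d)) (hP : ∀ d, IsProbabilityMeasure (P d))
    (X : (d : ℕ) → Ω d → EuclideanSpace ℝ (Fin d)) (hX : ∀ d, Measurable (X d))
    (hlaw : ∀ d, 1 ≤ d → Measure.map (X d) (P d) = volume.withDensity (fun x =>
      ENNReal.ofReal (Real.exp (-π * Metric.infDist x (K d) ^ 2) /
        ∫ y : EuclideanSpace ℝ (Fin d), Real.exp (-π * Metric.infDist y (K d) ^ 2)))) :
    Filter.Tendsto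
      (fun d : ℕ => Real.exp ((d : ℝ) / 2) *
        ((P d) {ω | Metric.infDist ((X d) ω) (K d) ≤ Real.sqrt d / θ}).toReal)
      Filter.atTop (nhds 0) := by
  obtain ⟨r, hr0, hr1, hev⟩ := analytic_bound c hc α hα θ hθ hθ'
  have hg : Filter.Tendsto (fun d : ℕ => (d:ℝ) * r^d) Filter.atTop (nhds 0) := by
    have hrinv : 1 < r⁻¹ := by
      rw [one_lt_inv_iff₀]; exact ⟨hr0, hr1⟩
    have h := tendsto_pow_const_div_const_pow_of_one_lt 1 hrinv
    refine h.congr fun n => ?_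
    rw [pow_one, inv_pow]; field_simp
  apply squeeze_zero' (Filter.Eventually.of_forall fun d =>
    mul_nonneg (Real.exp_nonneg _) ENNReal.toReal_nonneg) ?_ hg
  filter_upwards [hev, Filter.eventually_ge_atTop 1] with d hd hd1
  haveI := hP d
  obtain ⟨x, hx⟩ := hKint d hd1
  have hb := measure_bound hd1 (hKcomp d hd1) ⟨x, interior_subset hx⟩
    (by positivity : (0:ℝ) ≤ c * (d:ℝ)^α) (by positivity : (0:ℝ) ≤ Real.sqrt d / θ)
    (hKball d hd1) (P d) (X d) (hX d) (hlaw d hd1)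
  calc Real.exp ((d:ℝ)/2) *
        ((P d) {ω | Metric.infDist ((X d) ω) (K d) ≤ Real.sqrt d / θ}).toReal
      ≤ Real.exp ((d:ℝ)/2) * ((c * (d:ℝ)^α + Real.sqrt d / θ)^d *
          (Real.sqrt π ^ d / Real.Gamma ((d:ℝ)/2 + 1))) :=
        mul_le_mul_of_nonneg_left hb (Real.exp_nonneg _)
    _ ≤ (d:ℝ) * r^d := hd
end
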